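/- arXiv:1101.0112 — 4 statements merged into one kernel-verified Lean document; each statement's English description precedes it below -/
import Mathlib

section
/- Let P and Q be partial multivalued functions on Baire space with P ≰ᶜ_W Q. Then there exists a partial multivalued function M on Baire space such that P ⊕ M ≤ᶜ_W Q, and for every partial multivalued function R with P ⊕ R ≤ᶜ_W Q one has R ≤ᶜ_W M. (Consequently the continuous Weihrauch lattice is a Heyting algebra, with M representing the Heyting implication P → Q.) -/
namespace Weihrauch

/-- Baire space ℕ^ℕ. -/
abbrev Baire : Type := ℕ → ℕ

/-- The interleaving pairing homeomorphism ⟨p,q⟩. -/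
def pair (p q : Baire) : Baire := fun n => if n % 2 = 0 then p (n / 2) else q (n / 2)

/-- First component of the interleaving pairing. -/
def left (z : Baire) : Baire := fun n => z (2 * n)

/-- Second component of the interleaving pairing. -/
def right (z : Baire) : Baire := fun n => z (2 * n + 1)

/-- The sequence np = n,p(0),p(1),… . -/
def cons (n : ℕ) (p : Baire) : Baire := fun m => match m with
  | 0 => n
  | k + 1 => p k

/-- Drop the first entry of a sequence. -/
def tail (z : Baire) : Baire := fun n => z (n + 1)

/-- The constant zero sequence 0^ℕ. -/
def zero : Baire := fun _ => 0

/-- The constant one sequence 1^ℕ. -/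
def one : Baire := fun _ => 1

/-- Partial multivalued functions on Baire space. -/
abbrev MV : Type := Baire → Set Baire

/-- The domain of a partial multivalued function. -/
def dom (P : MV) : Set Baire := {x | (P x).Nonempty}

/-- Continuous Weihrauch reducibility P ≤ᶜ_W Q. -/
def CWle (P Q : MV) : Prop :=
  ∃ H K : Baire → Baire,
    ContinuousOn K (dom P) ∧
    (∀ x ∈ dom P, K x ∈ dom Q) ∧
    ContinuousOn H {z | ∃ x ∈ dom P, ∃ y ∈ Q (K x), z = pair x y} ∧
    (∀ x ∈ dom P, ∀ y ∈ Q (K x), H (pair x y) ∈ P x)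

/-- Continuous Weihrauch equivalence P ≡ᶜ_W Q. -/
def CWequiv (P Q : MV) : Prop := CWle P Q ∧ CWle Q P

/-- The infimum operation (P ⊕ Q)(⟨p,q⟩) = 0P(p) ∪ 1Q(q) for p ∈ dom P, q ∈ dom Q. -/
def oplus (P Q : MV) : MV := fun z =>
  {r | left z ∈ dom P ∧ right z ∈ dom Q ∧
       ((∃ s ∈ P (left z), r = cons 0 s) ∨ (∃ s ∈ Q (right z), r = cons 1 s))}

/-- The coproduct (P ∐ Q)(0p) = 0P(p), (P ∐ Q)(1p) = 1Q(p). -/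
def coprod (P Q : MV) : MV := fun z =>
  {r | (z 0 = 0 ∧ ∃ s ∈ P (tail z), r = cons 0 s) ∨
       (z 0 = 1 ∧ ∃ s ∈ Q (tail z), r = cons 1 s)}

/-- The product (P × Q)(⟨p,q⟩) = {⟨r,s⟩ | r ∈ P(p), s ∈ Q(q)}. -/
def prod (P Q : MV) : MV := fun z =>
  {r | ∃ s ∈ P (left z), ∃ t ∈ Q (right z), r = pair s t}

/-- A fixed finite tupling ⟨p₀,…,p_{n-1}⟩ of n sequences, by interleaving. -/
def ftup (n : ℕ) (f : ℕ → Baire) : Baire := fun m => f (m % n) (m / n)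

/-- The i-th projection inverting `ftup n`: `fproj n i (ftup n f) = f i` for i < n. -/
def fproj (n i : ℕ) (z : Baire) : Baire := fun j => z (j * n + i)

/-- The finite parallelization P*, with P*(n⟨p₁,…,pₙ⟩) = {n⟨r₁,…,rₙ⟩ | rᵢ ∈ P(pᵢ)}
for n ≥ 1 and P*(0p) = {0^ℕ}.  (Note every sequence is of the form `ftup n f`,
since `ftup n (fun i => fproj n i z) = z`.) -/
def fpar (P : MV) : MV := fun z =>
  {r | (z 0 = 0 ∧ r = zero) ∨
       (1 ≤ z 0 ∧ r 0 = z 0 ∧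
        ∀ i < z 0, fproj (z 0) i (tail r) ∈ P (fproj (z 0) i (tail z)))}

/-- Countable tupling ⟨p₁,p₂,…⟩ via the pairing bijection ℕ×ℕ→ℕ
(the family is indexed by 0,1,2,…). -/
def ctup (f : ℕ → Baire) : Baire := fun m => f (Nat.unpair m).1 (Nat.unpair m).2

/-- Projection inverting `ctup`: `cproj i (ctup f) = f i`. -/
def cproj (i : ℕ) (z : Baire) : Baire := fun j => z (Nat.pair i j)

/-- The 1-indexed component pᵢ of a countable tuple z = ⟨p₁,p₂,…⟩ (for i ≥ 1). -/
def comp (z : Baire) (i : ℕ) : Baire := cproj (i - 1) z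

/-- LLPO_{n,1}: at most one pair (i,j) with pᵢ(j) ≠ 0 in the domain;
values are the i0^ℕ with 1 ≤ i ≤ n and pᵢ = 0^ℕ. -/
def LLPOn (n : ℕ) : MV := fun z =>
  {r | (∀ i j i' j', 1 ≤ i → 1 ≤ i' → comp z i j ≠ 0 → comp z i' j' ≠ 0 →
          (i = i' ∧ j = j')) ∧
       ∃ i, 1 ≤ i ∧ i ≤ n ∧ comp z i = zero ∧ r = cons i zero}

/-- LLPO_{∞,m}: at most m pairs (i,j) with pᵢ(j) ≠ 0 in the domain;
values are the i0^ℕ with pᵢ = 0^ℕ. -/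
def LLPOinf (m : ℕ) : MV := fun z =>
  {r | (∃ s : Finset (ℕ × ℕ), s.card ≤ m ∧ ∀ i j, 1 ≤ i → comp z i j ≠ 0 → (i, j) ∈ s) ∧
       ∃ i, 1 ≤ i ∧ comp z i = zero ∧ r = cons i zero}

/-- The sequence 0ⁿ10^ℕ. -/
def zeros1 (n : ℕ) : Baire := fun m => if m = n then 1 else 0

/-- Σ_k^∞LLPO(⟨0^ℕ,p⟩) = LLPO_{∞,2}(p), Σ_k^∞LLPO(⟨0ⁿ10^ℕ,p⟩) = LLPO_{n,1}(p) for n ≥ k. -/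
def SigmaLLPO (k : ℕ) : MV := fun z =>
  {r | (left z = zero ∧ r ∈ LLPOinf 2 (right z)) ∨
       (∃ n, k ≤ n ∧ left z = zeros1 n ∧ r ∈ LLPOn n (right z))}

/-- c_𝒜, with dom(c_𝒜) = {0^ℕ} and c_𝒜(0^ℕ) = 𝒜. -/
def cA (A : Set Baire) : MV := fun z => {r | z = zero ∧ r ∈ A}

/-- d_𝒜, with dom(d_𝒜) = 𝒜 and d_𝒜(x) = {1^ℕ} for x ∈ 𝒜. -/
def dA (A : Set Baire) : MV := fun z => {r | z ∈ A ∧ r = one}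

/-- Continuous Medvedev reducibility 𝒜 ≤ᶜ_M 𝒝. -/
def CMle (A B : Set Baire) : Prop :=
  ∃ H : Baire → Baire, ContinuousOn H B ∧ ∀ x ∈ B, H x ∈ A

/-- The Medvedev sum 𝒜 + 𝒝 = 0𝒜 ∪ 1𝒝. -/
def msum (A B : Set Baire) : Set Baire := (cons 0 '' A) ∪ (cons 1 '' B)

/-- The Medvedev product 𝒜 × 𝒝 = {⟨p,q⟩ | p ∈ 𝒜, q ∈ 𝒝}. -/
def mprod (A B : Set Baire) : Set Baire := {z | ∃ p ∈ A, ∃ q ∈ B, z = pair p q}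

end Weihrauch


open Weihrauch
namespace CWH
open Weihrauch

/-! ### Basic plumbing lemmas -/

lemma left_pair (p q : Baire) : left (pair p q) = p := by
  funext n
  have h1 : (2 * n) % 2 = 0 := by omega
  have h2 : (2 * n) / 2 = n := by omega
  simp [left, pair, h1, h2]

lemma right_pair (p q : Baire) : right (pair p q) = q := by
  funext n
  have h1 : (2 * n + 1) % 2 = 1 := by omega
  have h2 : (2 * n + 1) / 2 = n := by omega
  simp [right, pair, h1, h2]

lemma tail_cons (a : ℕ) (s : Baire) : tail (cons a s) = s := rfl

lemma cons_zero (a : ℕ) (s : Baire) : cons a s 0 = a := rfl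

lemma cons_inj_head {a b : ℕ} {s t : Baire} (h : cons a s = cons b t) : a = b :=
  congrFun h 0

lemma cons_inj_tail {a b : ℕ} {s t : Baire} (h : cons a s = cons b t) : s = t := by
  funext n; exact congrFun h (n + 1)

lemma continuous_left : Continuous left :=
  continuous_pi fun n => continuous_apply _

lemma continuous_right : Continuous right :=
  continuous_pi fun n => continuous_apply _

lemma continuous_tail : Continuous tail :=
  continuous_pi fun n => continuous_apply _

lemma continuous_pair {X : Type*} [TopologicalSpace X] {a b : X → Baire}
    (ha : Continuous a) (hb : Continuous b) :
    Continuous (fun z => pair (a z) (b z)) := by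
  apply continuous_pi
  intro n
  unfold pair
  by_cases h : n % 2 = 0 <;> simp only [h, if_true, if_false, reduceIte] <;>
    [exact (continuous_apply _).comp ha; exact (continuous_apply _).comp hb]

/-! ### Cylinders and the product topology -/

lemma cylinder_mem_nhds (z : Baire) (m : ℕ) :
    {w : Baire | ∀ i < m, w i = z i} ∈ nhds z := by
  have : {w : Baire | ∀ i < m, w i = z i} =
      ⋂ i ∈ Finset.range m, {w : Baire | w i = z i} := by
    ext w; simp [Finset.mem_range]
  rw [this]
  refine IsOpen.mem_nhds ?_ ?_
  · refine isOpen_biInter_finset fun i _ => ?_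
    have : {w : Baire | w i = z i} = (fun w : Baire => w i) ⁻¹' ({z i} : Set ℕ) := by
      ext w; simp
    rw [this]
    exact (continuous_apply i).isOpen_preimage _ (isOpen_discrete _)
  · simp

lemma exists_cylinder_subset {z : Baire} {U : Set Baire} (hU : U ∈ nhds z) :
    ∃ m, ∀ w : Baire, (∀ i < m, w i = z i) → w ∈ U := by
  rw [nhds_pi, Filter.mem_pi] at hU
  obtain ⟨I, hIfin, t, ht, hsub⟩ := hU
  obtain ⟨m, hm⟩ : ∃ m, ∀ i ∈ I, i < m := by
    obtain ⟨m, hm⟩ := hIfin.bddAbove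
    exact ⟨m + 1, fun i hi => Nat.lt_succ_of_le (hm hi)⟩
  refine ⟨m, fun w hw => hsub ?_⟩
  intro i hi
  rw [hw i (hm i hi)]
  exact mem_of_mem_nhds (ht i)

end CWH
namespace CWH
open Weihrauch

/-! ### Associates and universal evaluation -/

/-- The first `m` values of `z` as a list. -/
def approx (z : Baire) (m : ℕ) : List ℕ := (List.range m).map z

lemma approx_length (z : Baire) (m : ℕ) : (approx z m).length = m := by
  simp [approx]

lemma approx_eq_of_agree {z z' : Baire} {m : ℕ} (h : ∀ i < m, z i = z' i) :
    approx z m = approx z' m := by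
  unfold approx
  apply List.map_congr_left
  intro i hi
  exact h i (List.mem_range.mp hi)

lemma agree_of_approx_eq {z z' : Baire} {m : ℕ} (h : approx z m = approx z' m) :
    ∀ i < m, z i = z' i := by
  intro i hi
  have := congrArg (fun l => l.getD i 0) h
  simpa [approx, List.getD_eq_getElem?_getD, hi] using this

/-- `φ` commits to an answer for coordinate `k` after reading `m` values of `z`. -/
def found (φ z : Baire) (k m : ℕ) : Prop :=
  φ (Encodable.encode (k :: approx z m)) ≠ 0

instance (φ z : Baire) (k : ℕ) : DecidablePred (found φ z k) := fun m => by
  unfold found; infer_instance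

/-- The evaluation `U φ z` converges at coordinate `k`. -/
def defined (φ z : Baire) (k : ℕ) : Prop := ∃ m, found φ z k m

open Classical in
/-- The universal evaluation of the associate `φ` on input `z`. -/
noncomputable def U (φ z : Baire) : Baire := fun k =>
  if h : defined φ z k then φ (Encodable.encode (k :: approx z (Nat.find h))) - 1 else 0

lemma U_eq {φ z : Baire} {k : ℕ} (h : defined φ z k) :
    U φ z k = φ (Encodable.encode (k :: approx z (Nat.find h))) - 1 := by
  unfold U
  rw [dif_pos h]

/-- Locality of the universal evaluation. -/
lemma U_local {φ φ' z z' : Baire} {k : ℕ} (h : defined φ z k)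
    (hz : ∀ i < Nat.find h, z' i = z i)
    (hφ : ∀ m ≤ Nat.find h, φ' (Encodable.encode (k :: approx z m)) =
      φ (Encodable.encode (k :: approx z m))) :
    defined φ' z' k ∧ U φ' z' k = U φ z k := by
  set m₀ := Nat.find h with hm₀
  have happ : ∀ m ≤ m₀, approx z' m = approx z m := fun m hm =>
    approx_eq_of_agree (fun i hi => hz i (lt_of_lt_of_le hi hm))
  have hf : found φ' z' k m₀ := by
    unfold found
    rw [happ m₀ le_rfl, hφ m₀ le_rfl]
    exact Nat.find_spec h
  have hd : defined φ' z' k := ⟨m₀, hf⟩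
  refine ⟨hd, ?_⟩
  have hfind : Nat.find hd = m₀ := by
    apply (Nat.find_eq_iff hd).mpr
    refine ⟨hf, fun n hn => ?_⟩
    unfold found
    rw [happ n (le_of_lt hn), hφ n (le_of_lt hn)]
    exact Nat.find_min h hn
  rw [U_eq hd, U_eq h, hfind, ← hm₀, happ m₀ le_rfl, hφ m₀ le_rfl]

/-- Continuity of the universal evaluation where it is everywhere defined. -/
lemma U_continuousOn {S : Set Baire} {Φ Z : Baire → Baire}
    (hΦ : Continuous Φ) (hZ : Continuous Z)
    (hdef : ∀ z ∈ S, ∀ k, defined (Φ z) (Z z) k) :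
    ContinuousOn (fun z => U (Φ z) (Z z)) S := by
  intro z₀ hz₀
  rw [ContinuousWithinAt, tendsto_pi_nhds]
  intro k
  have h := hdef z₀ hz₀ k
  set m₀ := Nat.find h with hm₀
  set B := ((Finset.range (m₀ + 1)).sup
      (fun m => Encodable.encode (k :: approx (Z z₀) m))) + 1 with hB
  have e1 : ∀ᶠ w in nhdsWithin z₀ S, ∀ i < B, Φ w i = Φ z₀ i := by
    have ht : Filter.Tendsto Φ (nhdsWithin z₀ S) (nhds (Φ z₀)) :=
      (hΦ.continuousWithinAt)
    exact ht.eventually (Filter.eventually_of_mem (cylinder_mem_nhds (Φ z₀) B)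
      (fun v hv => hv))
  have e2 : ∀ᶠ w in nhdsWithin z₀ S, ∀ i < m₀, Z w i = Z z₀ i := by
    have ht : Filter.Tendsto Z (nhdsWithin z₀ S) (nhds (Z z₀)) :=
      (hZ.continuousWithinAt)
    exact ht.eventually (Filter.eventually_of_mem (cylinder_mem_nhds (Z z₀) m₀)
      (fun v hv => hv))
  have key : ∀ᶠ w in nhdsWithin z₀ S,
      U (Φ w) (Z w) k = U (Φ z₀) (Z z₀) k := by
    filter_upwards [e1, e2] with w hw1 hw2
    have hcode : ∀ m ≤ m₀, Φ w (Encodable.encode (k :: approx (Z z₀) m)) =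
        Φ z₀ (Encodable.encode (k :: approx (Z z₀) m)) := by
      intro m hm
      apply hw1
      have : Encodable.encode (k :: approx (Z z₀) m) ≤
          (Finset.range (m₀ + 1)).sup
            (fun m => Encodable.encode (k :: approx (Z z₀) m)) :=
        Finset.le_sup (f := fun m => Encodable.encode (k :: approx (Z z₀) m))
          (Finset.mem_range.mpr (Nat.lt_succ_of_le hm))
      omega
    exact (U_local h (fun i hi => hw2 i hi) hcode).2
  exact Filter.Tendsto.congr' (Filter.EventuallyEq.symm key) tendsto_const_nhds

end CWH
namespace CWH
open Weihrauch

open Classical in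
/-- Every function continuous on a set `A` has an associate. -/
lemma exists_assoc {F : Baire → Baire} {A : Set Baire} (hF : ContinuousOn F A) :
    ∃ φ : Baire, ∀ z ∈ A, (∀ k, defined φ z k) ∧ U φ z = F z := by
  classical
  set pred : ℕ → List ℕ → Baire → Prop := fun k σ z =>
    z ∈ A ∧ σ = approx z σ.length ∧
      ∀ z' ∈ A, σ = approx z' σ.length → F z' k = F z k with hpred
  set φ : Baire := fun c =>
    match Encodable.decode (α := List ℕ) c with
    | some (k :: σ) => if h : ∃ z, pred k σ z then F h.choose k + 1 else 0
    | _ => 0 with hφ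
  have φ_eval : ∀ (k : ℕ) (σ : List ℕ),
      φ (Encodable.encode (k :: σ)) =
        if h : ∃ z, pred k σ z then F h.choose k + 1 else 0 := by
    intro k σ
    rw [hφ]
    simp only [Encodable.encodek]
  refine ⟨φ, fun z hz => ?_⟩
  have main : ∀ k, defined φ z k ∧ U φ z k = F z k := by
    intro k
    -- from continuity: a modulus m for coordinate k at z
    obtain ⟨m, hm⟩ : ∃ m, ∀ z' ∈ A, (∀ i < m, z i = z' i) → F z' k = F z k := by
      have ht : Filter.Tendsto F (nhdsWithin z A) (nhds (F z)) :=
        (hF z hz)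
      have hopen : {v : Baire | v k = F z k} ∈ nhds (F z) := by
        have := cylinder_mem_nhds (F z) (k + 1)
        exact Filter.mem_of_superset this (fun v hv => hv k (Nat.lt_succ_self k))
      have hmem : {w | F w k = F z k} ∈ nhdsWithin z A := ht hopen
      rw [mem_nhdsWithin] at hmem
      obtain ⟨u, hu_open, hzu, hsub⟩ := hmem
      obtain ⟨m, hcyl⟩ := exists_cylinder_subset (hu_open.mem_nhds hzu)
      refine ⟨m, fun z' hz' hagree => ?_⟩
      exact hsub ⟨hcyl z' (fun i hi => (hagree i hi).symm), hz'⟩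
    -- definedness at stage m
    have hfound : found φ z k m := by
      unfold found
      rw [φ_eval]
      have hex : ∃ w, pred k (approx z m) w := by
        refine ⟨z, hz, by rw [approx_length], fun z' hz' hσ => ?_⟩
        rw [approx_length] at hσ
        exact hm z' hz' (agree_of_approx_eq hσ)
      rw [dif_pos hex]
      exact Nat.succ_ne_zero _
    have hdef : defined φ z k := ⟨m, hfound⟩
    refine ⟨hdef, ?_⟩
    -- the value at the found stage is correct
    set m₁ := Nat.find hdef with hm₁
    have hf₁ : found φ z k m₁ := Nat.find_spec hdef
    unfold found at hf₁
    rw [φ_eval] at hf₁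
    by_cases hex : ∃ w, pred k (approx z m₁) w
    · rw [U_eq hdef, ← hm₁, φ_eval, dif_pos hex]
      obtain ⟨hwA, hwσ, hwval⟩ := hex.choose_spec
      have : F z k = F hex.choose k := by
        apply hwval z hz
        rw [approx_length]
      omega
    · rw [dif_neg hex] at hf₁
      exact absurd rfl hf₁
  exact ⟨fun k => (main k).1, funext fun k => (main k).2⟩

end CWH
namespace CWH
open Weihrauch

/-! ### The Heyting implication -/

lemma mem_dom_oplus {P R : MV} {a : Baire} :
    a ∈ dom (oplus P R) ↔ left a ∈ dom P ∧ right a ∈ dom R := by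
  constructor
  · rintro ⟨r, h1, h2, -⟩
    exact ⟨h1, h2⟩
  · rintro ⟨h1, h2⟩
    obtain ⟨s, hs⟩ := h1
    exact ⟨cons 0 s, ⟨s, hs⟩, h2, Or.inl ⟨s, hs, rfl⟩⟩

/-- The code for the inner reduction's `K`, from an input to `Mimp`. -/
def Kc (w : Baire) : Baire := left (left w)

/-- The code for the inner reduction's `H`, from an input to `Mimp`. -/
def Hc (w : Baire) : Baire := right (left w)

/-- The data part of an input to `Mimp`. -/
def xc (w : Baire) : Baire := right w

/-- The domain-condition of the Heyting implication. -/
def Mdom (P Q : MV) (w : Baire) : Prop :=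
  ∀ p ∈ dom P,
    (∀ k, defined (Kc w) (pair p (xc w)) k) ∧
    U (Kc w) (pair p (xc w)) ∈ dom Q ∧
    ∀ z ∈ Q (U (Kc w) (pair p (xc w))),
      (∀ k, defined (Hc w) (pair (pair p (xc w)) z) k) ∧
      ((∃ s ∈ P p, U (Hc w) (pair (pair p (xc w)) z) = cons 0 s) ∨
       (∃ s, U (Hc w) (pair (pair p (xc w)) z) = cons 1 s))

/-- The Heyting implication `P → Q` in the continuous Weihrauch lattice. -/
def Mimp (P Q : MV) : MV := fun w =>
  {s | Mdom P Q w ∧ ∃ p ∈ dom P, ∃ z ∈ Q (U (Kc w) (pair p (xc w))),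
        U (Hc w) (pair (pair p (xc w)) z) = cons 1 s}

lemma part1 (P Q : MV) : CWle (oplus P (Mimp P Q)) Q := by
  refine ⟨fun b => U (Hc (right (left b)))
      (pair (pair (left (left b)) (xc (right (left b)))) (right b)),
    fun a => U (Kc (right a)) (pair (left a) (xc (right a))), ?_, ?_, ?_, ?_⟩
  · -- continuity of K*
    apply U_continuousOn
    · exact continuous_left.comp (continuous_left.comp continuous_right)
    · exact continuous_pair continuous_left (continuous_right.comp continuous_right)
    · intro a ha k
      obtain ⟨hP, hM⟩ := mem_dom_oplus.mp ha
      obtain ⟨s, hmd, -⟩ := hM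
      exact (hmd (left a) hP).1 k
  · -- K* maps into dom Q
    intro a ha
    obtain ⟨hP, hM⟩ := mem_dom_oplus.mp ha
    obtain ⟨s, hmd, -⟩ := hM
    exact (hmd (left a) hP).2.1
  · -- continuity of H*
    apply U_continuousOn
    · exact continuous_right.comp (continuous_left.comp
        (continuous_right.comp continuous_left))
    · exact continuous_pair
        (continuous_pair (continuous_left.comp continuous_left)
          (continuous_right.comp (continuous_right.comp continuous_left)))
        continuous_right
    · rintro b ⟨x, hx, y, hy, rfl⟩ k
      simp only [left_pair, right_pair]
      obtain ⟨hP, hM⟩ := mem_dom_oplus.mp hx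
      obtain ⟨s, hmd, -⟩ := hM
      exact ((hmd (left x) hP).2.2 y hy).1 k
  · -- correctness
    intro x hx y hy
    obtain ⟨hP, hM⟩ := mem_dom_oplus.mp hx
    obtain ⟨s₀, hmd, -⟩ := id hM
    simp only [left_pair, right_pair]
    rcases ((hmd (left x) hP).2.2 y hy).2 with ⟨s, hsP, heq⟩ | ⟨s, heq⟩
    · exact ⟨hP, hM, Or.inl ⟨s, hsP, heq⟩⟩
    · exact ⟨hP, hM, Or.inr ⟨s, ⟨hmd, left x, hP, y, hy, heq⟩, heq⟩⟩

lemma part2 (P Q R : MV) (h : ¬ CWle P Q) (hR : CWle (oplus P R) Q) :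
    CWle R (Mimp P Q) := by
  obtain ⟨H, K, hKcont, hKdom, hHcont, hHcorr⟩ := hR
  obtain ⟨φK, hφK⟩ := exists_assoc hKcont
  obtain ⟨φH, hφH⟩ := exists_assoc hHcont
  set e : Baire := pair φK φH with he
  have hKc : ∀ x : Baire, Kc (pair e x) = φK := by
    intro x; simp [Kc, he, left_pair]
  have hHc : ∀ x : Baire, Hc (pair e x) = φH := by
    intro x; simp [Hc, he, left_pair, right_pair]
  have hxc : ∀ x : Baire, xc (pair e x) = x := by
    intro x; simp [xc, right_pair]
  -- membership of the combined inputs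
  have hA : ∀ x ∈ dom R, ∀ p ∈ dom P, pair p x ∈ dom (oplus P R) := by
    intro x hx p hp
    rw [mem_dom_oplus, left_pair, right_pair]
    exact ⟨hp, hx⟩
  have hT : ∀ x ∈ dom R, ∀ p ∈ dom P, ∀ z ∈ Q (K (pair p x)),
      pair (pair p x) z ∈ {b | ∃ a ∈ dom (oplus P R), ∃ y ∈ Q (K a), b = pair a y} :=
    fun x hx p hp z hz => ⟨pair p x, hA x hx p hp, z, hz, rfl⟩
  -- the domain condition holds
  have hB : ∀ x ∈ dom R, Mdom P Q (pair e x) := by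
    intro x hx p hp
    have hmem := hA x hx p hp
    have hk := hφK (pair p x) hmem
    rw [hKc, hxc]
    refine ⟨hk.1, ?_, ?_⟩
    · rw [hk.2]; exact hKdom _ hmem
    · intro z hz
      rw [hk.2] at hz
      have hh := hφH _ (hT x hx p hp z hz)
      rw [hHc]
      refine ⟨hh.1, ?_⟩
      have hcase := (hHcorr (pair p x) hmem z hz).2.2
      rw [left_pair, right_pair] at hcase
      rcases hcase with ⟨s, hs, hval⟩ | ⟨s, hs, hval⟩
      · exact Or.inl ⟨s, hs, by rw [hh.2]; exact hval⟩
      · exact Or.inr ⟨s, by rw [hh.2]; exact hval⟩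
  -- nonemptiness: some branch must answer with tag 1, else P ≤ Q
  have hC : ∀ x ∈ dom R, ∃ p ∈ dom P, ∃ z ∈ Q (K (pair p x)),
      ∃ s, H (pair (pair p x) z) = cons 1 s := by
    intro x hx
    by_contra hc
    push_neg at hc
    apply h
    refine ⟨fun b => tail (H (pair (pair (left b) x) (right b))),
      fun p => K (pair p x), ?_, ?_, ?_, ?_⟩
    · exact hKcont.comp
        ((continuous_pair continuous_id continuous_const).continuousOn)
        (fun p hp => hA x hx p hp)
    · exact fun p hp => hKdom _ (hA x hx p hp)
    · refine (continuous_tail.comp_continuousOn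
        (hHcont.comp ((continuous_pair
          (continuous_pair continuous_left continuous_const)
          continuous_right).continuousOn) ?_))
      rintro b ⟨p, hp, y, hy, rfl⟩
      simp only [left_pair, right_pair]
      exact hT x hx p hp y hy
    · intro p hp y hy
      simp only [left_pair, right_pair]
      have hcase := (hHcorr (pair p x) (hA x hx p hp) y hy).2.2
      rw [left_pair, right_pair] at hcase
      rcases hcase with ⟨s, hs, hval⟩ | ⟨s, hs, hval⟩
      · rw [hval, tail_cons]; exact hs
      · exact absurd hval (hc p hp y hy s)
  -- the reduction R ≤ Mimp P Q
  refine ⟨right, fun x => pair e x, ?_, ?_, ?_, ?_⟩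
  · exact (continuous_pair continuous_const continuous_id).continuousOn
  · intro x hx
    obtain ⟨p, hp, z, hz, s, hs⟩ := hC x hx
    refine ⟨s, hB x hx, p, hp, z, ?_, ?_⟩
    · rw [hKc, hxc, (hφK (pair p x) (hA x hx p hp)).2]
      exact hz
    · rw [hHc, hxc, (hφH _ (hT x hx p hp z hz)).2]
      exact hs
  · exact continuous_right.continuousOn
  · intro x hx y hy
    obtain ⟨hmd, p, hp, z, hz, heq⟩ := hy
    rw [hKc, hxc, (hφK (pair p x) (hA x hx p hp)).2] at hz
    rw [hHc, hxc, (hφH _ (hT x hx p hp z hz)).2] at heq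
    have hcase := (hHcorr (pair p x) (hA x hx p hp) z hz).2.2
    rw [left_pair, right_pair] at hcase
    rw [right_pair]
    rcases hcase with ⟨s, hs, hval⟩ | ⟨s, hs, hval⟩
    · exact absurd (cons_inj_head (hval.symm.trans heq)) (by norm_num)
    · have : s = y := cons_inj_tail (hval.symm.trans heq)
      exact this ▸ hs

end CWH

/-- If P ≰ᶜ_W Q, then there is M with P ⊕ M ≤ᶜ_W Q which is largest among all R
with P ⊕ R ≤ᶜ_W Q: the continuous Weihrauch lattice is a Heyting algebra. -/
theorem continuous_weihrauch_heyting (P Q : MV) (h : ¬ CWle P Q) :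
    ∃ M : MV, CWle (oplus P M) Q ∧ ∀ R : MV, CWle (oplus P R) Q → CWle R M := by
  exact ⟨CWH.Mimp P Q, CWH.part1 P Q, fun R hR => CWH.part2 P Q R h hR⟩
end

section
/- Let P and Q be partial multivalued functions on Baire space with P ≰ᶜ_W Q and Q* ≤ᶜ_W Q. Then there exists a partial multivalued function M with M* ≤ᶜ_W M, P ⊕ M ≤ᶜ_W Q, and such that for every partial multivalued function R with R* ≤ᶜ_W R and P ⊕ R ≤ᶜ_W Q one has R ≤ᶜ_W M. (Consequently the lattice 𝔠* of finitely-parallelizable continuous Weihrauch degrees is a Heyting algebra.) -/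
open Weihrauch

namespace HA


/-- agreement on first N coordinates -/
def agree (x y : Baire) (N : ℕ) : Prop := ∀ i < N, x i = y i

lemma agree_mono {x y : Baire} {N M : ℕ} (h : agree x y N) (hM : M ≤ N) : agree x y M :=
  fun i hi => h i (lt_of_lt_of_le hi hM)

lemma agree_max_left {x y : Baire} {N M : ℕ} (h : agree x y (max N M)) : agree x y N :=
  agree_mono h (le_max_left _ _)

lemma agree_max_right {x y : Baire} {N M : ℕ} (h : agree x y (max N M)) : agree x y M :=
  agree_mono h (le_max_right _ _)

/-- modulus-of-continuity property on a set -/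
def Mod (f : Baire → Baire) (S : Set Baire) : Prop :=
  ∀ x ∈ S, ∀ m, ∃ N, ∀ y ∈ S, agree x y N → f y m = f x m

lemma cyl_isOpen (x : Baire) (N : ℕ) : IsOpen {y : Baire | agree x y N} := by
  have : {y : Baire | agree x y N} = ⋂ i ∈ Finset.range N, {y : Baire | y i = x i} := by
    ext y; simp [agree, Set.mem_iInter, eq_comm]
  rw [this]
  refine isOpen_biInter_finset fun i _ => ?_
  have : {y : Baire | y i = x i} = (fun y : Baire => y i) ⁻¹' {x i} := rfl
  rw [this]
  exact IsOpen.preimage (continuous_apply i) (isOpen_discrete ({x i} : Set ℕ))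

lemma cyl_mem_nhds (x : Baire) (N : ℕ) : {y : Baire | agree x y N} ∈ nhds x :=
  (cyl_isOpen x N).mem_nhds (fun i _ => rfl)

lemma exists_cyl_subset {x : Baire} {U : Set Baire} (hU : IsOpen U) (hx : x ∈ U) :
    ∃ N, {y : Baire | agree x y N} ⊆ U := by
  obtain ⟨I, u, h1, h2⟩ := isOpen_pi_iff.1 hU x hx
  refine ⟨I.sup id + 1, fun y hy => h2 ?_⟩
  intro i hi
  have : x i = y i := hy i (Nat.lt_succ_of_le (Finset.le_sup (f := id) hi))
  rw [← this]; exact (h1 i hi).2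

lemma continuousOn_of_mod {f : Baire → Baire} {S : Set Baire} (hf : Mod f S) :
    ContinuousOn f S := by
  rw [continuousOn_pi]
  intro m x hx
  obtain ⟨N, hN⟩ := hf x hx m
  have hev : (fun y => f y m) =ᶠ[nhdsWithin x S] (fun _ => f x m) := by
    filter_upwards [nhdsWithin_le_nhds (cyl_mem_nhds x N), self_mem_nhdsWithin] with y hy hyS
    exact hN y hyS hy
  exact Filter.Tendsto.congr' hev.symm tendsto_const_nhds

lemma mod_of_continuousOn {f : Baire → Baire} {S : Set Baire} (hf : ContinuousOn f S) :
    Mod f S := by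
  intro x hx m
  have h1 : ContinuousWithinAt (fun y => f y m) S x :=
    ((continuous_apply m).comp_continuousOn hf).continuousWithinAt hx
  have h2 : {y : Baire | f y m = f x m} ∈ nhdsWithin x S :=
    h1 ((isOpen_discrete ({f x m} : Set ℕ)).mem_nhds rfl)
  obtain ⟨U, hUo, hxU, hUsub⟩ := mem_nhdsWithin.1 h2
  obtain ⟨N, hN⟩ := exists_cyl_subset hUo hxU
  exact ⟨N, fun y hyS hy => hUsub ⟨hN hy, hyS⟩⟩

lemma mod_agree {f : Baire → Baire} {S : Set Baire} (hf : Mod f S) (x : Baire) (hx : x ∈ S)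
    (M : ℕ) : ∃ N, ∀ y ∈ S, agree x y N → agree (f x) (f y) M := by
  induction M with
  | zero => exact ⟨0, fun y _ _ i hi => absurd hi (Nat.not_lt_zero i)⟩
  | succ M ih =>
    obtain ⟨N1, hN1⟩ := ih
    obtain ⟨N2, hN2⟩ := hf x hx M
    refine ⟨max N1 N2, fun y hy hagree i hi => ?_⟩
    rcases Nat.lt_succ_iff_lt_or_eq.1 hi with hi | rfl
    · exact hN1 y hy (agree_max_left hagree) i hi
    · exact (hN2 y hy (agree_max_right hagree)).symm

lemma mod_comp {g f : Baire → Baire} {S T : Set Baire} (hg : Mod g T) (hf : Mod f S)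
    (hmaps : ∀ x ∈ S, f x ∈ T) : Mod (fun u => g (f u)) S := by
  intro x hx m
  obtain ⟨M, hM⟩ := hg (f x) (hmaps x hx) m
  obtain ⟨N, hN⟩ := mod_agree hf x hx M
  refine ⟨N, fun y hy ha => hM (f y) (hmaps y hy) ?_⟩
  exact hN y hy ha

lemma mod_mono {f : Baire → Baire} {S T : Set Baire} (hf : Mod f T) (hsub : S ⊆ T) :
    Mod f S := fun x hx m => (hf x (hsub hx) m).imp fun N hN y hy => hN y (hsub hy)

lemma mod_const (c : Baire) (S : Set Baire) : Mod (fun _ => c) S :=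
  fun _ _ _ => ⟨0, fun _ _ _ => rfl⟩

lemma mod_id (S : Set Baire) : Mod (fun u => u) S :=
  fun x _ m => ⟨m + 1, fun y _ h => (h m (Nat.lt_succ_self m)).symm⟩

lemma mod_left {f : Baire → Baire} {S : Set Baire} (hf : Mod f S) :
    Mod (fun u => left (f u)) S := by
  intro x hx m
  obtain ⟨N, hN⟩ := hf x hx (2 * m)
  exact ⟨N, fun y hy ha => hN y hy ha⟩

lemma mod_right {f : Baire → Baire} {S : Set Baire} (hf : Mod f S) :
    Mod (fun u => right (f u)) S := by
  intro x hx m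
  obtain ⟨N, hN⟩ := hf x hx (2 * m + 1)
  exact ⟨N, fun y hy ha => hN y hy ha⟩

lemma mod_tail {f : Baire → Baire} {S : Set Baire} (hf : Mod f S) :
    Mod (fun u => tail (f u)) S := by
  intro x hx m
  obtain ⟨N, hN⟩ := hf x hx (m + 1)
  exact ⟨N, fun y hy ha => hN y hy ha⟩

lemma mod_pair {f g : Baire → Baire} {S : Set Baire} (hf : Mod f S) (hg : Mod g S) :
    Mod (fun u => pair (f u) (g u)) S := by
  intro x hx m
  obtain ⟨N1, hN1⟩ := hf x hx (m / 2)
  obtain ⟨N2, hN2⟩ := hg x hx (m / 2)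
  refine ⟨max N1 N2, fun y hy ha => ?_⟩
  show (if m % 2 = 0 then f y (m / 2) else g y (m / 2)) =
    (if m % 2 = 0 then f x (m / 2) else g x (m / 2))
  rcases Nat.even_or_odd m with he | ho
  · rw [if_pos (Nat.even_iff.1 he), if_pos (Nat.even_iff.1 he)]
    exact hN1 y hy (agree_max_left ha)
  · rw [if_neg (by simp [Nat.odd_iff.1 ho]), if_neg (by simp [Nat.odd_iff.1 ho])]
    exact hN2 y hy (agree_max_right ha)

/-- uniform modulus for finitely many coordinates of finitely many ℕ-valued functions -/
lemma mod_finite {S : Set Baire} {x : Baire} (g : ℕ → Baire → ℕ) (M : ℕ)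
    (h : ∀ m < M, ∃ N, ∀ y ∈ S, agree x y N → g m y = g m x) :
    ∃ N, ∀ y ∈ S, agree x y N → ∀ m < M, g m y = g m x := by
  induction M with
  | zero => exact ⟨0, fun y _ _ m hm => absurd hm (Nat.not_lt_zero m)⟩
  | succ M ih =>
    obtain ⟨N1, hN1⟩ := ih (fun m hm => h m (Nat.lt_succ_of_lt hm))
    obtain ⟨N2, hN2⟩ := h M (Nat.lt_succ_self M)
    refine ⟨max N1 N2, fun y hy ha m hm => ?_⟩
    rcases Nat.lt_succ_iff_lt_or_eq.1 hm with hm | rfl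
    · exact hN1 y hy (agree_max_left ha) m hm
    · exact hN2 y hy (agree_max_right ha)

/-! ### Associates: coding continuous functions by points of Baire space -/

/-- code of the first `l` values of `x` -/
def pcode (x : Baire) (l : ℕ) : ℕ := Encodable.encode (List.ofFn (fun i : Fin l => x i))

lemma pcode_congr {x y : Baire} {l : ℕ} (h : ∀ i < l, x i = y i) : pcode x l = pcode y l := by
  unfold pcode
  congr 1
  exact List.ofFn_inj.2 (funext fun i => h i i.isLt)

lemma pcode_inj {x y : Baire} {l l' : ℕ} (h : pcode x l = pcode y l') :
    l = l' ∧ ∀ i < l, x i = y i := by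
  have := Encodable.encode_injective h
  have hlen : l = l' := by
    have := congrArg List.length this
    simpa using this
  subst hlen
  rw [List.ofFn_inj] at this
  exact ⟨rfl, fun i hi => congrFun this ⟨i, hi⟩⟩

/-- the code α has found an answer for coordinate n on input x -/
def found (α x : Baire) (n : ℕ) : Prop := ∃ l, α (Nat.pair n (pcode x l)) ≠ 0

def Valid (α x : Baire) : Prop := ∀ n, found α x n

/-- evaluation of the coded function -/
noncomputable def Ev (α x : Baire) : Baire := fun n =>
  α (Nat.pair n (pcode x (sInf {l | α (Nat.pair n (pcode x l)) ≠ 0}))) - 1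

/-- modulus property of the joint evaluation map -/
lemma mod_ev {A X : Baire → Baire} {S : Set Baire} (hA : Mod A S) (hX : Mod X S) (n : ℕ)
    (hv : ∀ x ∈ S, found (A x) (X x) n) (x : Baire) (hx : x ∈ S) :
    ∃ N, ∀ y ∈ S, agree x y N → Ev (A y) (X y) n = Ev (A x) (X x) n := by
  classical
  set L : Baire → Set ℕ := fun u => {l | A u (Nat.pair n (pcode (X u) l)) ≠ 0} with hL
  have hne : (L x).Nonempty := hv x hx
  set l0 : ℕ := sInf (L x) with hl0
  -- moduli: X-coordinates below l0, A-values at the relevant finitely many indices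
  obtain ⟨N1, hN1⟩ := mod_agree hX x hx l0
  have hAfin : ∃ N, ∀ y ∈ S, agree x y N →
      ∀ l < l0 + 1, A y (Nat.pair n (pcode (X x) l)) = A x (Nat.pair n (pcode (X x) l)) := by
    apply mod_finite (fun l y => A y (Nat.pair n (pcode (X x) l)))
    intro l _
    exact hA x hx (Nat.pair n (pcode (X x) l))
  obtain ⟨N2, hN2⟩ := hAfin
  refine ⟨max N1 N2, fun y hy ha => ?_⟩
  have hXag : agree (X x) (X y) l0 := hN1 y hy (agree_max_left ha)
  have hpc : ∀ l ≤ l0, pcode (X y) l = pcode (X x) l := by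
    intro l hl
    exact (pcode_congr (fun i hi => hXag i (lt_of_lt_of_le hi hl))).symm
  have hval : ∀ l ≤ l0, A y (Nat.pair n (pcode (X y) l)) = A x (Nat.pair n (pcode (X x) l)) := by
    intro l hl
    rw [hpc l hl]
    exact hN2 y hy (agree_max_right ha) l (Nat.lt_succ_of_le hl)
  have hl0y : l0 ∈ L y := by
    have h1 : l0 ∈ L x := Nat.sInf_mem hne
    simpa [hL, hval l0 le_rfl] using h1
  have hsInfy : sInf (L y) = l0 := by
    apply le_antisymm (Nat.sInf_le hl0y)
    by_contra hlt
    push_neg at hlt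
    have hmem : sInf (L y) ∈ L y := Nat.sInf_mem ⟨l0, hl0y⟩
    have : sInf (L y) ∈ L x := by
      have := hval (sInf (L y)) (le_of_lt hlt)
      show A x (Nat.pair n (pcode (X x) (sInf (L y)))) ≠ 0
      exact fun h0 => hmem (this.trans h0)
    exact Nat.notMem_of_lt_sInf hlt this
  show A y (Nat.pair n (pcode (X y) (sInf (L y)))) - 1
      = A x (Nat.pair n (pcode (X x) (sInf (L x)))) - 1
  rw [hsInfy, ← hl0, hval l0 le_rfl]

open scoped Classical in
/-- an associate for `f` on `D` -/
noncomputable def mkAssoc (f : Baire → Baire) (D : Set Baire) : Baire := fun k =>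
  if h : ∃ x, x ∈ D ∧ ∃ l, pcode x l = (Nat.unpair k).2 ∧
      ∀ y ∈ D, pcode y l = (Nat.unpair k).2 → f y (Nat.unpair k).1 = f x (Nat.unpair k).1
  then f h.choose (Nat.unpair k).1 + 1 else 0

lemma mkAssoc_spec {f : Baire → Baire} {D : Set Baire} (hf : Mod f D) :
    ∀ x ∈ D, Valid (mkAssoc f D) x ∧ Ev (mkAssoc f D) x = f x := by
  classical
  have key : ∀ x ∈ D, ∀ n, ∀ l, mkAssoc f D (Nat.pair n (pcode x l)) ≠ 0 →
      mkAssoc f D (Nat.pair n (pcode x l)) = f x n + 1 := by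
    intro x hx n l hne
    unfold mkAssoc at hne ⊢
    rw [Nat.unpair_pair] at hne ⊢
    split at hne
    case isFalse => exact absurd rfl hne
    case isTrue hcond =>
      rw [dif_pos hcond]
      obtain ⟨hcD, l', hcl, hcall⟩ := hcond.choose_spec
      obtain ⟨rfl, -⟩ := pcode_inj hcl
      have := hcall x hx rfl
      rw [this]
  have valid : ∀ x ∈ D, Valid (mkAssoc f D) x := by
    intro x hx n
    obtain ⟨N, hN⟩ := hf x hx n
    refine ⟨N, ?_⟩
    unfold mkAssoc
    rw [Nat.unpair_pair]
    have hcond : ∃ x', x' ∈ D ∧ ∃ l, pcode x' l = pcode x N ∧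
        ∀ y ∈ D, pcode y l = pcode x N → f y n = f x' n := by
      refine ⟨x, hx, N, rfl, fun y hy hpc => ?_⟩
      obtain ⟨-, hag⟩ := pcode_inj hpc
      exact hN y hy (fun i hi => (hag i hi).symm)
    rw [dif_pos hcond]
    exact Nat.succ_ne_zero _
  intro x hx
  refine ⟨valid x hx, funext fun n => ?_⟩
  have hne : ({l | mkAssoc f D (Nat.pair n (pcode x l)) ≠ 0} : Set ℕ).Nonempty := valid x hx n
  have hmem := Nat.sInf_mem hne
  show mkAssoc f D (Nat.pair n (pcode x (sInf _))) - 1 = f x n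
  rw [key x hx n _ hmem]
  rfl

end HA


namespace HA

@[simp] lemma left_pair (p q : Baire) : left (pair p q) = p := by
  funext n
  show (if (2*n) % 2 = 0 then p ((2*n)/2) else q ((2*n)/2)) = p n
  rw [if_pos (Nat.mul_mod_right 2 n), Nat.mul_div_cancel_left n (by norm_num : 0 < 2)]

@[simp] lemma right_pair (p q : Baire) : right (pair p q) = q := by
  funext n
  show (if (2*n+1) % 2 = 0 then p ((2*n+1)/2) else q ((2*n+1)/2)) = q n
  have h1 : (2*n+1) % 2 = 1 := by omega
  have h2 : (2*n+1) / 2 = n := by omega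
  rw [if_neg (by omega), h2]

@[simp] lemma tail_cons (a : ℕ) (p : Baire) : tail (cons a p) = p := rfl

@[simp] lemma cons_zero' (a : ℕ) (p : Baire) : cons a p 0 = a := rfl

@[simp] lemma cons_succ (a : ℕ) (p : Baire) (m : ℕ) : cons a p (m+1) = p m := rfl

@[simp] lemma right_zero (u : Baire) : right u 0 = u 1 := rfl

lemma pair_zero (p q : Baire) : pair p q 0 = p 0 := rfl

lemma fproj_ftup {n i : ℕ} (hi : i < n) (f : ℕ → Baire) : fproj n i (ftup n f) = f i := by
  funext j
  show f ((j * n + i) % n) ((j * n + i) / n) = f i j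
  have hn : 0 < n := Nat.lt_of_le_of_lt (Nat.zero_le i) hi
  have h1 : (j * n + i) % n = i := by
    rw [Nat.mul_comm, Nat.mul_add_mod, Nat.mod_eq_of_lt hi]
  have h2 : (j * n + i) / n = j := by
    rw [Nat.add_comm, Nat.add_mul_div_right _ _ hn, Nat.div_eq_of_lt hi, Nat.zero_add]
  rw [h1, h2]

lemma mem_dom_oplus {P R : MV} {z : Baire} :
    z ∈ dom (oplus P R) ↔ left z ∈ dom P ∧ right z ∈ dom R := by
  constructor
  · rintro ⟨r, h1, h2, -⟩
    exact ⟨h1, h2⟩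
  · rintro ⟨⟨s, hs⟩, h2⟩
    exact ⟨cons 0 s, ⟨s, hs⟩, h2, Or.inl ⟨s, hs, rfl⟩⟩

lemma pair_mem_dom_oplus {P R : MV} {p x : Baire} (hp : p ∈ dom P) (hx : x ∈ dom R) :
    pair p x ∈ dom (oplus P R) := by
  rw [mem_dom_oplus, left_pair, right_pair]
  exact ⟨hp, hx⟩

lemma continuous_right : Continuous (right : Baire → Baire) :=
  continuous_pi fun n => continuous_apply (2*n+1)

lemma cwle_of_dom_empty {P Q : MV} (h : dom P = ∅) : CWle P Q := by
  refine ⟨id, id, ?_, ?_, ?_, ?_⟩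
  · rw [h]; exact continuousOn_empty _
  · intro x hx; rw [h] at hx; exact absurd hx (Set.notMem_empty x)
  · have : {z : Baire | ∃ x ∈ dom P, ∃ y ∈ Q (id x), z = pair x y} = ∅ := by
      rw [h]; ext z; simp
    rw [this]; exact continuousOn_empty _
  · intro x hx; rw [h] at hx; exact absurd hx (Set.notMem_empty x)

/-! ### The implication -/

def hc (z : Baire) : Baire := left (left z)
def kc (z : Baire) : Baire := right (left z)
def xv (z : Baire) : Baire := right z

@[simp] lemma hc_pair (a b x : Baire) : hc (pair (pair a b) x) = a := by simp [hc]
@[simp] lemma kc_pair (a b x : Baire) : kc (pair (pair a b) x) = b := by simp [kc]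
@[simp] lemma xv_pair (a b x : Baire) : xv (pair (pair a b) x) = x := by simp [xv]

def Cond (P Q : MV) (z : Baire) : Prop :=
  (∀ p ∈ dom P, Valid (kc z) (pair p (xv z)) ∧ Ev (kc z) (pair p (xv z)) ∈ dom Q) ∧
  (∀ p ∈ dom P, ∀ y ∈ Q (Ev (kc z) (pair p (xv z))),
     Valid (hc z) (pair (pair p (xv z)) y) ∧
     (Ev (hc z) (pair (pair p (xv z)) y) 0 = 0 → tail (Ev (hc z) (pair (pair p (xv z)) y)) ∈ P p))

def Impl (P Q : MV) : MV := fun z =>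
  {r | Cond P Q z ∧ ∃ p ∈ dom P, ∃ y ∈ Q (Ev (kc z) (pair p (xv z))),
       Ev (hc z) (pair (pair p (xv z)) y) 0 ≠ 0 ∧
       r = tail (Ev (hc z) (pair (pair p (xv z)) y))}

lemma mem_dom_Impl {P Q : MV} {z : Baire} :
    z ∈ dom (Impl P Q) ↔ Cond P Q z ∧ ∃ p ∈ dom P, ∃ y ∈ Q (Ev (kc z) (pair p (xv z))),
      Ev (hc z) (pair (pair p (xv z)) y) 0 ≠ 0 := by
  constructor
  · rintro ⟨r, hC, p, hp, y, hy, hfl, -⟩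
    exact ⟨hC, p, hp, y, hy, hfl⟩
  · rintro ⟨hC, p, hp, y, hy, hfl⟩
    exact ⟨_, hC, p, hp, y, hy, hfl, rfl⟩

/-- Maximality: any R with P ⊕ R ≤ Q reduces to Impl P Q. -/
lemma le_Impl (P Q R : MV) (h : ¬ CWle P Q) (hPR : CWle (oplus P R) Q) :
    CWle R (Impl P Q) := by
  obtain ⟨H, K, hKc, hKd, hHc, hHcor⟩ := hPR
  set S := dom (oplus P R) with hS
  set TH := {z : Baire | ∃ x ∈ S, ∃ y ∈ Q (K x), z = pair x y} with hTH
  have hKmod : Mod K S := mod_of_continuousOn hKc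
  have hHmod : Mod H TH := mod_of_continuousOn hHc
  set Ak := mkAssoc K S with hAk
  set Ah := mkAssoc H TH with hAh
  have specK := mkAssoc_spec hKmod
  have specH := mkAssoc_spec hHmod
  refine ⟨right, fun x => pair (pair Ah Ak) x, ?_, ?_, ?_, ?_⟩
  · exact continuousOn_of_mod (mod_pair (mod_const _ _) (mod_id _))
  · -- domain condition
    intro x hx
    have hmemS : ∀ p ∈ dom P, pair p x ∈ S := fun p hp => pair_mem_dom_oplus hp hx
    have hEvK : ∀ p ∈ dom P, Ev Ak (pair p x) = K (pair p x) := by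
      intro p hp; exact (specK _ (hmemS p hp)).2
    have hmemTH : ∀ p ∈ dom P, ∀ y ∈ Q (K (pair p x)), pair (pair p x) y ∈ TH := by
      intro p hp y hy; exact ⟨pair p x, hmemS p hp, y, hy, rfl⟩
    have hEvH : ∀ p ∈ dom P, ∀ y ∈ Q (K (pair p x)),
        Ev Ah (pair (pair p x) y) = H (pair (pair p x) y) := by
      intro p hp y hy; exact (specH _ (hmemTH p hp y hy)).2
    rw [mem_dom_Impl]
    constructor
    · constructor
      · intro p hp
        simp only [kc_pair, xv_pair]
        exact ⟨(specK _ (hmemS p hp)).1, by rw [hEvK p hp]; exact hKd _ (hmemS p hp)⟩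
      · intro p hp y hy
        simp only [kc_pair, xv_pair, hc_pair] at hy ⊢
        rw [hEvK p hp] at hy
        refine ⟨(specH _ (hmemTH p hp y hy)).1, ?_⟩
        rw [hEvH p hp y hy]
        intro hfl
        have hval := hHcor (pair p x) (hmemS p hp) y hy
        obtain ⟨-, -, ⟨s, hs, heq⟩ | ⟨s, hs, heq⟩⟩ := hval
        · rw [heq, tail_cons]; rw [left_pair] at hs; exact hs
        · rw [heq] at hfl; exact absurd hfl (by simp)
    · -- nonemptiness via ¬ P ≤ Q
      by_contra hflag
      push_neg at hflag
      apply h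
      refine ⟨fun v => tail (H (pair (pair (left v) x) (right v))), fun p => K (pair p x),
        ?_, ?_, ?_, ?_⟩
      · refine continuousOn_of_mod (mod_comp hKmod (mod_pair (mod_id _) (mod_const _ _)) ?_)
        intro p hp; exact hmemS p hp
      · intro p hp; exact hKd _ (hmemS p hp)
      · refine continuousOn_of_mod (mod_tail (mod_comp hHmod
          (mod_pair (mod_pair (mod_left (mod_id _)) (mod_const _ _)) (mod_right (mod_id _))) ?_))
        rintro v ⟨p, hp, y, hy, rfl⟩
        rw [left_pair, right_pair]
        exact hmemTH p hp y hy
      · intro p hp y hy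
        simp only [left_pair, right_pair]
        have hval := hHcor (pair p x) (hmemS p hp) y hy
        obtain ⟨-, -, ⟨s, hs, heq⟩ | ⟨s, hs, heq⟩⟩ := hval
        · rw [heq, tail_cons]; rw [left_pair] at hs; exact hs
        · exfalso
          have := hflag p hp y (by simp only [kc_pair, xv_pair]; rw [hEvK p hp]; exact hy)
          simp only [hc_pair, xv_pair] at this
          rw [hEvH p hp y hy, heq] at this
          simp at this
  · exact continuous_right.continuousOn
  · -- correctness
    intro x hx r hr
    obtain ⟨hC, p, hp, y, hy, hfl, heq⟩ := hr
    simp only [kc_pair, xv_pair, hc_pair] at hy hfl heq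
    have hmemS : pair p x ∈ S := pair_mem_dom_oplus hp hx
    have hEvK : Ev Ak (pair p x) = K (pair p x) := (specK _ hmemS).2
    rw [hEvK] at hy
    have hmemTH : pair (pair p x) y ∈ TH := ⟨pair p x, hmemS, y, hy, rfl⟩
    have hEvH : Ev Ah (pair (pair p x) y) = H (pair (pair p x) y) := (specH _ hmemTH).2
    rw [hEvH] at hfl heq
    have hval := hHcor (pair p x) hmemS y hy
    obtain ⟨-, -, ⟨s, hs, heq2⟩ | ⟨s, hs, heq2⟩⟩ := hval
    · rw [heq2] at hfl; exact absurd rfl hfl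
    · rw [right_pair]
      rw [heq, heq2, tail_cons]
      rw [right_pair] at hs
      exact hs

lemma mod_hc {f : Baire → Baire} {S : Set Baire} (hf : Mod f S) :
    Mod (fun u => hc (f u)) S := mod_left (mod_left hf)
lemma mod_kc {f : Baire → Baire} {S : Set Baire} (hf : Mod f S) :
    Mod (fun u => kc (f u)) S := mod_right (mod_left hf)
lemma mod_xv {f : Baire → Baire} {S : Set Baire} (hf : Mod f S) :
    Mod (fun u => xv (f u)) S := mod_right hf

/-- The reduction P ⊕ (P → Q) ≤ Q. -/
lemma oplus_Impl_le (P Q : MV) : CWle (oplus P (Impl P Q)) Q := by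
  classical
  set S := dom (oplus P (Impl P Q)) with hSdef
  set K1 : Baire → Baire :=
    fun w => Ev (kc (right w)) (pair (left w) (xv (right w))) with hK1
  set A1 : Baire → Baire := fun v => hc (right (left v)) with hA1
  set X1 : Baire → Baire :=
    fun v => pair (pair (left (left v)) (xv (right (left v)))) (right v) with hX1
  set e : Baire → Baire := fun v => Ev (A1 v) (X1 v) with he
  set T1 := {z : Baire | ∃ w ∈ S, ∃ y ∈ Q (K1 w), z = pair w y} with hT1
  have hmemS : ∀ w ∈ S, left w ∈ dom P ∧ Cond P Q (right w) := by
    intro w hw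
    rw [hSdef, mem_dom_oplus] at hw
    exact ⟨hw.1, (mem_dom_Impl.1 hw.2).1⟩
  have hK1dom : ∀ w ∈ S, K1 w ∈ dom Q := by
    intro w hw
    exact ((hmemS w hw).2.1 (left w) (hmemS w hw).1).2
  have hvalT : ∀ v ∈ T1, Valid (A1 v) (X1 v) := by
    rintro v ⟨w, hw, y, hy, rfl⟩
    simp only [hA1, hX1, left_pair, right_pair]
    exact ((hmemS w hw).2.2 (left w) (hmemS w hw).1 y hy).1
  refine ⟨fun v => cons (if e v 0 = 0 then 0 else 1) (tail (e v)), K1, ?_, hK1dom, ?_, ?_⟩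
  · -- continuity of K1
    apply continuousOn_of_mod
    intro w hw m
    exact mod_ev (mod_kc (mod_right (mod_id _)))
      (mod_pair (mod_left (mod_id _)) (mod_xv (mod_right (mod_id _)))) m
      (fun w hw => ((hmemS w hw).2.1 (left w) (hmemS w hw).1).1 m) w hw
  · -- continuity of H1
    apply continuousOn_of_mod
    have hmodA : Mod A1 T1 := mod_hc (mod_right (mod_left (mod_id _)))
    have hmodX : Mod X1 T1 :=
      mod_pair (mod_pair (mod_left (mod_left (mod_id _))) (mod_xv (mod_right (mod_left (mod_id _)))))
        (mod_right (mod_id _))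
    have hmode : ∀ n, ∀ v ∈ T1, ∃ N, ∀ v' ∈ T1, agree v v' N → e v' n = e v n :=
      fun n v hv => mod_ev hmodA hmodX n (fun v hv => hvalT v hv n) v hv
    intro v hv m
    match m with
    | 0 =>
      obtain ⟨N, hN⟩ := hmode 0 v hv
      exact ⟨N, fun v' hv' ha => by
        show (if e v' 0 = 0 then 0 else 1) = (if e v 0 = 0 then 0 else 1)
        rw [hN v' hv' ha]⟩
    | m + 1 =>
      obtain ⟨N, hN⟩ := hmode (m + 1) v hv
      exact ⟨N, fun v' hv' ha => by
        show tail (e v') m = tail (e v) m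
        show e v' (m + 1) = e v (m + 1)
        exact hN v' hv' ha⟩
  · -- correctness
    intro w hw y hy
    obtain ⟨hp, hC⟩ := hmemS w hw
    have hyq : y ∈ Q (Ev (kc (right w)) (pair (left w) (xv (right w)))) := hy
    have hCb := hC.2 (left w) hp y hyq
    have hev : e (pair w y) = Ev (hc (right w)) (pair (pair (left w) (xv (right w))) y) := by
      simp only [he, hA1, hX1, left_pair, right_pair]
    rw [mem_dom_oplus] at hw
    by_cases hfl : e (pair w y) 0 = 0
    · refine ⟨hw.1, hw.2, Or.inl ⟨tail (e (pair w y)), ?_, ?_⟩⟩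
      · rw [hev]; rw [hev] at hfl; exact hCb.2 hfl
      · show cons (if e (pair w y) 0 = 0 then 0 else 1) (tail (e (pair w y))) = _
        rw [if_pos hfl]
    · refine ⟨hw.1, hw.2, Or.inr ⟨tail (e (pair w y)), ?_, ?_⟩⟩
      · rw [hev]; rw [hev] at hfl
        exact ⟨hC, left w, hp, y, hyq, hfl, rfl⟩
      · show cons (if e (pair w y) 0 = 0 then 0 else 1) (tail (e (pair w y))) = _
        rw [if_neg hfl]



/-! ### Parallelization machinery -/

lemma mod_fproj {f : Baire → Baire} {S : Set Baire} (n i : ℕ) (hf : Mod f S) :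
    Mod (fun u => fproj n i (f u)) S := by
  intro x hx m
  obtain ⟨N, hN⟩ := hf x hx (m * n + i)
  exact ⟨N, fun y hy ha => hN y hy ha⟩

lemma mod_finite2 {S : Set Baire} {x : Baire} (g : ℕ → ℕ → Baire → ℕ) (M1 M2 : ℕ)
    (h : ∀ i < M1, ∀ k < M2, ∃ N, ∀ y ∈ S, agree x y N → g i k y = g i k x) :
    ∃ N, ∀ y ∈ S, agree x y N → ∀ i < M1, ∀ k < M2, g i k y = g i k x := by
  induction M1 with
  | zero => exact ⟨0, fun y _ _ i hi => absurd hi (Nat.not_lt_zero i)⟩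
  | succ M1 ih =>
    obtain ⟨N1, hN1⟩ := ih (fun i hi => h i (Nat.lt_succ_of_lt hi))
    obtain ⟨N2, hN2⟩ := mod_finite (fun k y => g M1 k y) M2 (h M1 (Nat.lt_succ_self M1))
    refine ⟨max N1 N2, fun y hy ha i hi k hk => ?_⟩
    rcases Nat.lt_succ_iff_lt_or_eq.1 hi with hi | rfl
    · exact hN1 y hy (agree_max_left ha) i hi k hk
    · exact hN2 y hy (agree_max_right ha) k hk

/-- the `i`-th component of an `fpar` instance `z` with `z 0 = n` -/
def cmp (z : Baire) (n i : ℕ) : Baire := fproj n i (tail z)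

/-- combined query to `fpar Q` -/
noncomputable def bigK (u : Baire) : Baire := fun m =>
  match m with
  | 0 => right u 0
  | m + 1 =>
    Ev (kc (cmp (right u) (right u 0) (m % right u 0)))
      (pair (left u) (xv (cmp (right u) (right u 0) (m % right u 0)))) (m / right u 0)

lemma bigK_zero (u : Baire) : bigK u 0 = right u 0 := rfl

lemma bigK_proj {u : Baire} {n i : ℕ} (hn : n = right u 0) (hi : i < n) :
    fproj n i (tail (bigK u)) =
      Ev (kc (cmp (right u) n i)) (pair (left u) (xv (cmp (right u) n i))) := by
  funext j
  have hn0 : 0 < n := Nat.lt_of_le_of_lt (Nat.zero_le i) hi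
  have h1 : (j * n + i) % n = i := by
    rw [Nat.mul_comm, Nat.mul_add_mod, Nat.mod_eq_of_lt hi]
  have h2 : (j * n + i) / n = j := by
    rw [Nat.add_comm, Nat.add_mul_div_right _ _ hn0, Nat.div_eq_of_lt hi, Nat.zero_add]
  show Ev (kc (cmp (right u) (right u 0) ((j * n + i) % right u 0)))
    (pair (left u) (xv (cmp (right u) (right u 0) ((j * n + i) % right u 0))))
    ((j * n + i) / right u 0) = _
  rw [← hn, h1, h2]

lemma fpar_sol {P : MV} {z : Baire} (hz : 1 ≤ z 0) (s : ℕ → Baire)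
    (hs : ∀ i < z 0, s i ∈ P (fproj (z 0) i (tail z))) :
    cons (z 0) (ftup (z 0) s) ∈ fpar P z := by
  refine Or.inr ⟨hz, rfl, fun i hi => ?_⟩
  rw [tail_cons, fproj_ftup hi]
  exact hs i hi

lemma fpar_comp_mem {P : MV} {z r : Baire} (hz : 1 ≤ z 0) (hr : r ∈ fpar P z) :
    r 0 = z 0 ∧ ∀ i < z 0, fproj (z 0) i (tail r) ∈ P (fproj (z 0) i (tail z)) := by
  rcases hr with ⟨h0, -⟩ | ⟨-, h1, h2⟩
  · omega
  · exact ⟨h1, h2⟩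

lemma dom_fpar_comp {P : MV} {z : Baire} (hz : z ∈ dom (fpar P)) (h1 : 1 ≤ z 0) :
    ∀ i < z 0, fproj (z 0) i (tail z) ∈ dom P := by
  obtain ⟨r, hr⟩ := hz
  intro i hi
  exact ⟨_, (fpar_comp_mem h1 hr).2 i hi⟩

lemma mem_dom_fpar_of {P : MV} {z : Baire} (h1 : 1 ≤ z 0)
    (hcomp : ∀ i < z 0, fproj (z 0) i (tail z) ∈ dom P) : z ∈ dom (fpar P) := by
  classical
  refine ⟨cons (z 0) (ftup (z 0) (fun i => if h : i < z 0 then (hcomp i h).choose else zero)), ?_⟩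
  apply fpar_sol h1
  intro i hi
  rw [dif_pos hi]
  exact (hcomp i hi).choose_spec

lemma zero_mem_dom_fpar {P : MV} : zero ∈ dom (fpar P) :=
  ⟨zero, Or.inl ⟨rfl, rfl⟩⟩

lemma mod_bigK_on {S' : Set Baire} {n0 : ℕ} (hn0 : 1 ≤ n0)
    (hfix : ∀ u ∈ S', right u 0 = n0)
    (hval : ∀ u ∈ S', ∀ i < n0, Valid (kc (cmp (right u) n0 i))
      (pair (left u) (xv (cmp (right u) n0 i)))) :
    Mod bigK S' := by
  intro u0 hu0 m
  match m with
  | 0 =>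
    refine ⟨0, fun u hu _ => ?_⟩
    show right u 0 = right u0 0
    rw [hfix u hu, hfix u0 hu0]
  | m + 1 =>
    have key : ∀ u ∈ S', bigK u (m + 1) =
        Ev (kc (cmp (right u) n0 (m % n0))) (pair (left u) (xv (cmp (right u) n0 (m % n0))))
          (m / n0) := by
      intro u hu
      show Ev (kc (cmp (right u) (right u 0) (m % right u 0)))
        (pair (left u) (xv (cmp (right u) (right u 0) (m % right u 0)))) (m / right u 0) = _
      rw [hfix u hu]
    have hmlt : m % n0 < n0 := Nat.mod_lt _ hn0
    obtain ⟨N, hN⟩ := mod_ev (S := S')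
      (A := fun u => kc (cmp (right u) n0 (m % n0)))
      (X := fun u => pair (left u) (xv (cmp (right u) n0 (m % n0))))
      (mod_kc (mod_fproj _ _ (mod_tail (mod_right (mod_id _)))))
      (mod_pair (mod_left (mod_id _)) (mod_xv (mod_fproj _ _ (mod_tail (mod_right (mod_id _))))))
      (m / n0) (fun u hu => hval u hu _ hmlt _) u0 hu0
    refine ⟨N, fun u hu ha => ?_⟩
    rw [key u hu, key u0 hu0]
    exact hN u hu ha

/-- combined query function -/
noncomputable def kstar (q0 : Baire) (KQ : Baire → Baire) (u : Baire) : Baire :=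
  if right u 0 = 0 then q0 else KQ (bigK u)

lemma mod_kstar {Q : MV} {q0 : Baire} {KQ : Baire → Baire} {D : Set Baire}
    (hKQmod : Mod KQ (dom (fpar Q)))
    (hbig : ∀ u ∈ D, 1 ≤ right u 0 → bigK u ∈ dom (fpar Q))
    (hval : ∀ u ∈ D, ∀ i < right u 0, Valid (kc (cmp (right u) (right u 0) i))
      (pair (left u) (xv (cmp (right u) (right u 0) i)))) :
    Mod (kstar q0 KQ) D := by
  intro u0 hu0 m
  set n0 := right u0 0 with hn0def
  by_cases hn0 : n0 = 0
  · refine ⟨2, fun u hu ha => ?_⟩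
    have h1 : u 1 = u0 1 := (ha 1 (by norm_num)).symm
    have h2 : right u 0 = 0 := by
      show u 1 = 0
      rw [h1]
      exact hn0
    show kstar q0 KQ u m = kstar q0 KQ u0 m
    unfold kstar
    rw [if_pos h2, if_pos hn0]
  · have hn1 : 1 ≤ n0 := Nat.one_le_iff_ne_zero.2 hn0
    set S' := D ∩ {u : Baire | right u 0 = n0} with hS'
    have hmodb : Mod bigK S' := by
      apply mod_bigK_on hn1 (fun u hu => hu.2)
      intro u hu i hi
      have := hval u hu.1 i (by rw [hu.2]; exact hi)
      rwa [hu.2] at this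
    obtain ⟨N1, hN1⟩ := hKQmod (bigK u0) (hbig u0 hu0 hn1) m
    obtain ⟨N, hN⟩ := mod_agree hmodb u0 ⟨hu0, rfl⟩ N1
    refine ⟨max N 2, fun u hu ha => ?_⟩
    have h1 : u 1 = u0 1 := ((agree_max_right ha) 1 (by norm_num)).symm
    have h2 : right u 0 = n0 := h1
    have huS' : u ∈ S' := ⟨hu, h2⟩
    have hagb : agree (bigK u0) (bigK u) N1 := hN u huS' (agree_max_left ha)
    show kstar q0 KQ u m = kstar q0 KQ u0 m
    unfold kstar
    rw [if_neg (by rw [h2]; exact hn0), if_neg (by show ¬ (n0 = 0); exact hn0)]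
    exact hN1 (bigK u) (hbig u hu (by rw [h2]; exact hn1)) hagb

/-- component answer translation -/
noncomputable def estar (HQ : Baire → Baire) (v : Baire) (i : ℕ) : Baire :=
  Ev (hc (cmp (right (left v)) (right (left v) 0) i))
     (pair (pair (left (left v)) (xv (cmp (right (left v)) (right (left v) 0) i)))
           (cmp (HQ (pair (bigK (left v)) (right v))) (right (left v) 0) i))

open scoped Classical in
/-- combined answer translation -/
noncomputable def hstar (HQ : Baire → Baire) (v : Baire) : Baire :=
  if right (left v) 0 = 0 then cons 1 zero
  else if h : ∃ i, i < right (left v) 0 ∧ estar HQ v i 0 = 0 then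
    cons 0 (tail (estar HQ v (sInf {i | i < right (left v) 0 ∧ estar HQ v i 0 = 0})))
  else cons 1 (cons (right (left v) 0) (ftup (right (left v) 0) (fun i => tail (estar HQ v i))))

lemma hstar_zero_branch (HQ : Baire → Baire) (v : Baire) (h : right (left v) 0 = 0) :
    hstar HQ v = cons 1 zero := by
  unfold hstar; rw [if_pos h]

lemma hstar_flag0 {HQ : Baire → Baire} {v : Baire} (hn : ¬ right (left v) 0 = 0)
    (h0 : hstar HQ v 0 = 0) :
    ∃ i, i < right (left v) 0 ∧ estar HQ v i 0 = 0 ∧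
      hstar HQ v = cons 0 (tail (estar HQ v i)) := by
  classical
  unfold hstar at h0 ⊢
  rw [if_neg hn] at h0 ⊢
  by_cases hex : ∃ i, i < right (left v) 0 ∧ estar HQ v i 0 = 0
  · rw [dif_pos hex] at h0 ⊢
    exact ⟨_, (Nat.sInf_mem hex).1, (Nat.sInf_mem hex).2, rfl⟩
  · rw [dif_neg hex] at h0
    exact absurd h0 (by simp [cons])

lemma hstar_flag1 {HQ : Baire → Baire} {v : Baire} (hn : ¬ right (left v) 0 = 0)
    (h0 : hstar HQ v 0 ≠ 0) :
    (∀ i < right (left v) 0, estar HQ v i 0 ≠ 0) ∧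
      hstar HQ v = cons 1 (cons (right (left v) 0)
        (ftup (right (left v) 0) (fun i => tail (estar HQ v i)))) := by
  classical
  unfold hstar at h0 ⊢
  rw [if_neg hn] at h0 ⊢
  by_cases hex : ∃ i, i < right (left v) 0 ∧ estar HQ v i 0 = 0
  · rw [dif_pos hex] at h0
    exact absurd rfl h0
  · rw [dif_neg hex] at h0 ⊢
    push_neg at hex
    exact ⟨hex, rfl⟩

lemma mod_hstar {Q : MV} {KQ HQ : Baire → Baire} {D : Set Baire}
    (hHQmod : Mod HQ {w : Baire | ∃ a ∈ dom (fpar Q), ∃ y ∈ Q (KQ a), w = pair a y})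
    (hbig : ∀ v ∈ D, 1 ≤ right (left v) 0 → bigK (left v) ∈ dom (fpar Q))
    (hky : ∀ v ∈ D, 1 ≤ right (left v) 0 → right v ∈ Q (KQ (bigK (left v))))
    (hvalk : ∀ v ∈ D, ∀ i < right (left v) 0,
      Valid (kc (cmp (right (left v)) (right (left v) 0) i))
        (pair (left (left v)) (xv (cmp (right (left v)) (right (left v) 0) i))))
    (hvalh : ∀ v ∈ D, 1 ≤ right (left v) 0 → ∀ i < right (left v) 0,
      Valid (hc (cmp (right (left v)) (right (left v) 0) i))
        (pair (pair (left (left v)) (xv (cmp (right (left v)) (right (left v) 0) i)))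
          (cmp (HQ (pair (bigK (left v)) (right v))) (right (left v) 0) i))) :
    Mod (hstar HQ) D := by
  classical
  intro v0 hv0 m
  set n0 := right (left v0) 0 with hn0def
  by_cases hn0 : n0 = 0
  · refine ⟨3, fun v hv ha => ?_⟩
    have h2 : right (left v) 0 = 0 := by
      show v 2 = 0
      rw [← (ha 2 (by norm_num))]
      exact hn0
    rw [hstar_zero_branch HQ v h2, hstar_zero_branch HQ v0 hn0]
  · have hn1 : 1 ≤ n0 := Nat.one_le_iff_ne_zero.2 hn0
    set S'' := D ∩ {v : Baire | right (left v) 0 = n0} with hS''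
    have hfix : ∀ v ∈ S'', right (left v) 0 = n0 := fun v hv => hv.2
    -- estar with frozen n0
    set A : ℕ → Baire → Baire := fun i v => hc (cmp (right (left v)) n0 i) with hA
    set Yf : Baire → Baire := fun v => HQ (pair (bigK (left v)) (right v)) with hYf
    set X : ℕ → Baire → Baire := fun i v =>
      pair (pair (left (left v)) (xv (cmp (right (left v)) n0 i))) (cmp (Yf v) n0 i) with hX
    have key : ∀ v ∈ S'', ∀ i, estar HQ v i = Ev (A i v) (X i v) := by
      intro v hv i
      unfold estar
      rw [hfix v hv]
    -- Mod of Yf on S''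
    have hmodY : Mod Yf S'' := by
      apply mod_comp hHQmod
      · apply mod_pair ?_ (mod_right (mod_id _))
        apply mod_comp (S := S'') (T := left '' S'')
        · apply mod_bigK_on hn1
          · rintro u ⟨v, hv, rfl⟩; exact hfix v hv
          · rintro u ⟨v, hv, rfl⟩ i hi
            have := hvalk v hv.1 i (by rw [hfix v hv]; exact hi)
            rwa [hfix v hv] at this
        · exact mod_left (mod_id _)
        · exact fun v hv => ⟨v, hv, rfl⟩
      · intro v hv
        exact ⟨bigK (left v), hbig v hv.1 (by rw [hfix v hv]; exact hn1),
          right v, hky v hv.1 (by rw [hfix v hv]; exact hn1), rfl⟩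
    -- per-(i,k) moduli for estar on S''
    have hv0S : v0 ∈ S'' := ⟨hv0, rfl⟩
    have hestar : ∀ i < n0, ∀ k < m + 2, ∃ N, ∀ v ∈ S'', agree v0 v N →
        estar HQ v i k = estar HQ v0 i k := by
      intro i hi k _
      have hmodA : Mod (A i) S'' := mod_hc (mod_fproj _ _ (mod_tail (mod_right (mod_left (mod_id _)))))
      have hmodX : Mod (X i) S'' :=
        mod_pair (mod_pair (mod_left (mod_left (mod_id _)))
            (mod_xv (mod_fproj _ _ (mod_tail (mod_right (mod_left (mod_id _)))))))
          (mod_fproj _ _ (mod_tail hmodY))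
      have hfound : ∀ v ∈ S'', found (A i v) (X i v) k := by
        intro v hv
        have := hvalh v hv.1 (by rw [hfix v hv]; exact hn1) i (by rw [hfix v hv]; exact hi) k
        rw [hfix v hv] at this
        exact this
      obtain ⟨N, hN⟩ := mod_ev hmodA hmodX k hfound v0 hv0S
      refine ⟨N, fun v hv ha => ?_⟩
      rw [key v hv i, key v0 hv0S i]
      exact hN v hv ha
    obtain ⟨N, hN⟩ := mod_finite2 (fun i k v => estar HQ v i k) n0 (m + 2) hestar
    refine ⟨max N 3, fun v hv ha => ?_⟩
    have h2 : right (left v) 0 = n0 := by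
      show v 2 = n0
      rw [← ((agree_max_right ha) 2 (by norm_num))]
      rfl
    have hvS : v ∈ S'' := ⟨hv, h2⟩
    have heq : ∀ i < n0, ∀ k < m + 2, estar HQ v i k = estar HQ v0 i k :=
      hN v hvS (agree_max_left ha)
    show hstar HQ v m = hstar HQ v0 m
    unfold hstar
    rw [h2, ← hn0def]
    rw [if_neg hn0, if_neg hn0]
    have hset : {i | i < n0 ∧ estar HQ v i 0 = 0} = {i | i < n0 ∧ estar HQ v0 i 0 = 0} := by
      ext i
      exact and_congr_right fun hi => by rw [heq i hi 0 (by omega)]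
    by_cases hcond : ∃ i, i < n0 ∧ estar HQ v0 i 0 = 0
    · have hcondv : ∃ i, i < n0 ∧ estar HQ v i 0 = 0 := by
        obtain ⟨i, hi, he⟩ := hcond
        exact ⟨i, hi, by rw [heq i hi 0 (by omega)]; exact he⟩
      rw [dif_pos hcondv, dif_pos hcond]
      have hsinf : sInf {i | i < n0 ∧ estar HQ v i 0 = 0}
          = sInf {i | i < n0 ∧ estar HQ v0 i 0 = 0} := by rw [hset]
      rw [hsinf]
      set i0 := sInf {i | i < n0 ∧ estar HQ v0 i 0 = 0} with hi0def
      have hi0 : i0 < n0 := (Nat.sInf_mem hcond).1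
      match m with
      | 0 => rfl
      | m + 1 =>
        show estar HQ v i0 (m + 1) = estar HQ v0 i0 (m + 1)
        exact heq i0 hi0 (m + 1) (by omega)
    · have hcondv : ¬ ∃ i, i < n0 ∧ estar HQ v i 0 = 0 := by
        rw [show {i | i < n0 ∧ estar HQ v i 0 = 0} = {i | i < n0 ∧ estar HQ v0 i 0 = 0} from hset] at *
        · exact fun ⟨i, hi, he⟩ => hcond ⟨i, hi, by rw [← heq i hi 0 (by omega)]; exact he⟩
      rw [dif_neg hcondv, dif_neg hcond]
      match m with
      | 0 => rfl
      | 1 => rfl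
      | (j + 2) =>
        show ftup n0 (fun i => tail (estar HQ v i)) j = ftup n0 (fun i => tail (estar HQ v0 i)) j
        show estar HQ v (j % n0) (j / n0 + 1) = estar HQ v0 (j % n0) (j / n0 + 1)
        exact heq (j % n0) (Nat.mod_lt _ hn1) (j / n0 + 1)
          (by have := Nat.div_le_self j n0; omega)

/-- The implication is finitely parallelizable. -/
lemma fpar_Impl_le (P Q : MV) (hnle : ¬ CWle P Q) (hQ : CWle (fpar Q) Q) :
    CWle (fpar (Impl P Q)) (Impl P Q) := by
  classical
  obtain ⟨HQ, KQ, hKQc, hKQd, hHQc, hHQcor⟩ := hQ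
  have hPne : (dom P).Nonempty := by
    rcases Set.eq_empty_or_nonempty (dom P) with he | hne
    · exact absurd (cwle_of_dom_empty he) hnle
    · exact hne
  set q0 := KQ zero with hq0def
  have hq0dom : q0 ∈ dom Q := hKQd zero zero_mem_dom_fpar
  set SM := dom (fpar (Impl P Q)) with hSM
  set Dk := {u : Baire | left u ∈ dom P ∧ right u ∈ SM} with hDk
  have hcompC : ∀ u ∈ Dk, ∀ i < right u 0, Cond P Q (cmp (right u) (right u 0) i) := by
    intro u hu i hi
    have h1 : 1 ≤ right u 0 := Nat.lt_of_le_of_lt (Nat.zero_le i) hi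
    exact (mem_dom_Impl.1 (dom_fpar_comp hu.2 h1 i hi)).1
  have hvalk : ∀ u ∈ Dk, ∀ i < right u 0, Valid (kc (cmp (right u) (right u 0) i))
      (pair (left u) (xv (cmp (right u) (right u 0) i))) :=
    fun u hu i hi => ((hcompC u hu i hi).1 (left u) hu.1).1
  have hbig : ∀ u ∈ Dk, 1 ≤ right u 0 → bigK u ∈ dom (fpar Q) := by
    intro u hu h1
    apply mem_dom_fpar_of (z := bigK u) h1
    intro i hi
    have hproj := bigK_proj (u := u) rfl hi
    show fproj (bigK u 0) i (tail (bigK u)) ∈ dom Q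
    rw [show bigK u 0 = right u 0 from rfl, hproj]
    exact ((hcompC u hu i hi).1 (left u) hu.1).2
  have hkdom : ∀ u ∈ Dk, kstar q0 KQ u ∈ dom Q := by
    intro u hu
    unfold kstar
    by_cases h0 : right u 0 = 0
    · rw [if_pos h0]; exact hq0dom
    · rw [if_neg h0]; exact hKQd _ (hbig u hu (Nat.one_le_iff_ne_zero.2 h0))
  set Dh := {v : Baire | ∃ u ∈ Dk, ∃ y ∈ Q (kstar q0 KQ u), v = pair u y} with hDh
  -- answers of HQ decompose into component answers
  have hyq : ∀ u ∈ Dk, ∀ y ∈ Q (kstar q0 KQ u), 1 ≤ right u 0 → ∀ i < right u 0,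
      cmp (HQ (pair (bigK u) y)) (right u 0) i ∈
        Q (Ev (kc (cmp (right u) (right u 0) i)) (pair (left u) (xv (cmp (right u) (right u 0) i)))) := by
    intro u hu y hy h1 i hi
    have hyKQ : y ∈ Q (KQ (bigK u)) := by
      unfold kstar at hy
      rw [if_neg (by omega)] at hy
      exact hy
    have hy' := hHQcor (bigK u) (hbig u hu h1) y hyKQ
    have h2 := (fpar_comp_mem (z := bigK u) h1 hy').2 i hi
    rw [show bigK u 0 = right u 0 from rfl] at h2
    rw [bigK_proj (u := u) rfl hi] at h2
    exact h2
  have hvalh : ∀ u ∈ Dk, ∀ y ∈ Q (kstar q0 KQ u), 1 ≤ right u 0 → ∀ i < right u 0,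
      Valid (hc (cmp (right u) (right u 0) i))
        (pair (pair (left u) (xv (cmp (right u) (right u 0) i)))
          (cmp (HQ (pair (bigK u) y)) (right u 0) i)) :=
    fun u hu y hy h1 i hi =>
      ((hcompC u hu i hi).2 (left u) hu.1 _ (hyq u hu y hy h1 i hi)).1
  -- flag facts
  have hflag0 : ∀ u ∈ Dk, ∀ y ∈ Q (kstar q0 KQ u), hstar HQ (pair u y) 0 = 0 →
      tail (hstar HQ (pair u y)) ∈ P (left u) := by
    intro u hu y hy h0
    by_cases hn : right u 0 = 0
    · rw [hstar_zero_branch HQ (pair u y) (by rw [left_pair]; exact hn)] at h0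
      exact absurd h0 (by simp [cons])
    · obtain ⟨i, hi, hei, heqv⟩ := hstar_flag0 (by rw [left_pair]; exact hn) h0
      rw [left_pair] at hi
      rw [heqv, tail_cons]
      have h1 : 1 ≤ right u 0 := Nat.one_le_iff_ne_zero.2 hn
      have hC := ((hcompC u hu i hi).2 (left u) hu.1 _ (hyq u hu y hy h1 i hi)).2
      unfold estar at hei
      simp only [left_pair, right_pair] at hei
      show tail (estar HQ (pair u y) i) ∈ P (left u)
      unfold estar
      simp only [left_pair, right_pair]
      exact hC hei
  have hsol : ∀ u ∈ Dk, ∀ y ∈ Q (kstar q0 KQ u), hstar HQ (pair u y) 0 ≠ 0 →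
      tail (hstar HQ (pair u y)) ∈ fpar (Impl P Q) (right u) := by
    intro u hu y hy h0
    by_cases hn : right u 0 = 0
    · rw [hstar_zero_branch HQ (pair u y) (by rw [left_pair]; exact hn), tail_cons]
      exact Or.inl ⟨hn, rfl⟩
    · obtain ⟨hall, heqv⟩ := hstar_flag1 (by rw [left_pair]; exact hn) h0
      simp only [left_pair, right_pair] at hall heqv
      rw [heqv, tail_cons]
      apply fpar_sol (Nat.one_le_iff_ne_zero.2 hn)
      intro i hi
      have h1 : 1 ≤ right u 0 := Nat.one_le_iff_ne_zero.2 hn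
      refine ⟨hcompC u hu i hi, left u, hu.1, cmp (HQ (pair (bigK u) y)) (right u 0) i,
        hyq u hu y hy h1 i hi, ?_, ?_⟩
      · have := hall i hi
        unfold estar at this
        simp only [left_pair, right_pair] at this
        exact this
      · unfold estar
        simp only [left_pair, right_pair]
        rfl
  -- moduli and associates
  have hmodk : Mod (kstar q0 KQ) Dk :=
    mod_kstar (Q := Q) (mod_of_continuousOn hKQc) hbig hvalk
  have hmodh : Mod (hstar HQ) Dh := by
    apply mod_hstar (Q := Q) (KQ := KQ) (mod_of_continuousOn hHQc)
    · rintro v ⟨u, hu, y, hy, rfl⟩ h1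
      simp only [left_pair] at h1 ⊢
      exact hbig u hu h1
    · rintro v ⟨u, hu, y, hy, rfl⟩ h1
      simp only [left_pair, right_pair] at h1 ⊢
      unfold kstar at hy
      rw [if_neg (by omega)] at hy
      exact hy
    · rintro v ⟨u, hu, y, hy, rfl⟩ i hi
      simp only [left_pair, right_pair] at hi ⊢
      exact hvalk u hu i hi
    · rintro v ⟨u, hu, y, hy, rfl⟩ h1 i hi
      simp only [left_pair, right_pair] at h1 hi ⊢
      exact hvalh u hu y hy h1 i hi
  set Ak := mkAssoc (kstar q0 KQ) Dk with hAkdef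
  set Ah := mkAssoc (hstar HQ) Dh with hAhdef
  have specK := mkAssoc_spec hmodk
  have specH := mkAssoc_spec hmodh
  refine ⟨fun v => if v 0 = 0 then zero else right v, fun z => pair (pair Ah Ak) z, ?_, ?_, ?_, ?_⟩
  · exact continuousOn_of_mod (mod_pair (mod_const _ _) (mod_id _))
  · -- domain condition
    intro z hz
    have hzDk : ∀ p ∈ dom P, pair p z ∈ Dk := by
      intro p hp
      refine ⟨by rw [left_pair]; exact hp, by rw [right_pair]; exact hz⟩
    have hEvk : ∀ p ∈ dom P, Ev Ak (pair p z) = kstar q0 KQ (pair p z) :=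
      fun p hp => (specK _ (hzDk p hp)).2
    have hDhmem : ∀ p ∈ dom P, ∀ y ∈ Q (kstar q0 KQ (pair p z)), pair (pair p z) y ∈ Dh :=
      fun p hp y hy => ⟨pair p z, hzDk p hp, y, hy, rfl⟩
    rw [mem_dom_Impl]
    refine ⟨⟨?_, ?_⟩, ?_⟩
    · intro p hp
      simp only [kc_pair, xv_pair]
      exact ⟨(specK _ (hzDk p hp)).1, by rw [hEvk p hp]; exact hkdom _ (hzDk p hp)⟩
    · intro p hp y hy
      simp only [kc_pair, xv_pair, hc_pair] at hy ⊢
      rw [hEvk p hp] at hy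
      have hvDh := hDhmem p hp y hy
      refine ⟨(specH _ hvDh).1, ?_⟩
      rw [(specH _ hvDh).2]
      intro h0
      have := hflag0 (pair p z) (hzDk p hp) y hy h0
      rw [left_pair] at this
      exact this
    · -- nonemptiness of solutions
      by_cases hz0 : z 0 = 0
      · obtain ⟨p, hp⟩ := hPne
        have hkz : kstar q0 KQ (pair p z) = q0 := by
          unfold kstar
          rw [if_pos (by rw [right_pair]; exact hz0)]
        obtain ⟨y, hy⟩ := hq0dom
        refine ⟨p, hp, y, ?_, ?_⟩
        · simp only [kc_pair, xv_pair]
          rw [hEvk p hp, hkz]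
          exact hy
        · simp only [hc_pair, xv_pair]
          have hvDh := hDhmem p hp y (by rw [hkz]; exact hy)
          rw [(specH _ hvDh).2]
          rw [hstar_zero_branch HQ _ (by simp only [left_pair, right_pair]; exact hz0)]
          simp [cons]
      · by_contra hflag
        push_neg at hflag
        apply hnle
        refine ⟨fun w => tail (hstar HQ (pair (pair (left w) z) (right w))),
          fun p => kstar q0 KQ (pair p z), ?_, ?_, ?_, ?_⟩
        · exact continuousOn_of_mod (mod_comp hmodk
            (mod_pair (mod_id _) (mod_const _ _)) (fun p hp => hzDk p hp))
        · exact fun p hp => hkdom _ (hzDk p hp)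
        · refine continuousOn_of_mod (mod_tail (mod_comp hmodh
            (mod_pair (mod_pair (mod_left (mod_id _)) (mod_const _ _)) (mod_right (mod_id _))) ?_))
          rintro w ⟨p, hp, y, hy, rfl⟩
          simp only [left_pair, right_pair]
          exact hDhmem p hp y hy
        · intro p hp y hy
          simp only [left_pair, right_pair]
          have hvDh := hDhmem p hp y hy
          have h0 : hstar HQ (pair (pair p z) y) 0 = 0 := by
            have := hflag p hp y (by simp only [kc_pair, xv_pair]; rw [hEvk p hp]; exact hy)
            simp only [hc_pair, xv_pair] at this
            rw [(specH _ hvDh).2] at this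
            exact this
          have := hflag0 (pair p z) (hzDk p hp) y hy h0
          rw [left_pair] at this
          exact this
  · -- continuity of the outer translation
    apply continuousOn_of_mod
    intro v hv m
    refine ⟨max 1 (2 * m + 2), fun v' hv' ha => ?_⟩
    have h0 : v' 0 = v 0 := ((agree_max_left ha) 0 (by norm_num)).symm
    show (if v' 0 = 0 then zero else right v') m = (if v 0 = 0 then zero else right v) m
    by_cases hc : v 0 = 0
    · rw [h0, if_pos hc, if_pos hc]
    · rw [h0, if_neg hc, if_neg hc]
      show v' (2 * m + 1) = v (2 * m + 1)
      exact ((agree_max_right ha) (2 * m + 1) (by omega)).symm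
  · -- correctness
    intro z hz r hr
    obtain ⟨hC, p, hp, y, hy, hfl, heqr⟩ := hr
    simp only [kc_pair, xv_pair, hc_pair] at hy hfl heqr
    have hzDk : pair p z ∈ Dk := ⟨by rw [left_pair]; exact hp, by rw [right_pair]; exact hz⟩
    rw [(specK _ hzDk).2] at hy
    have hvDh : pair (pair p z) y ∈ Dh := ⟨pair p z, hzDk, y, hy, rfl⟩
    rw [(specH _ hvDh).2] at hfl heqr
    have hsolv := hsol (pair p z) hzDk y hy hfl
    rw [right_pair] at hsolv
    show (if pair z r 0 = 0 then zero else right (pair z r)) ∈ fpar (Impl P Q) z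
    have hpz : pair z r 0 = z 0 := rfl
    rw [hpz]
    by_cases hz0 : z 0 = 0
    · rw [if_pos hz0]
      exact Or.inl ⟨hz0, rfl⟩
    · rw [if_neg hz0, right_pair, heqr]
      exact hsolv
end HA

/-- If P ≰ᶜ_W Q and Q* ≤ᶜ_W Q, then there is a ×-idempotent M with P ⊕ M ≤ᶜ_W Q
which is largest among all ×-idempotent R with P ⊕ R ≤ᶜ_W Q: the lattice 𝔠* of
finitely-parallelizable continuous Weihrauch degrees is a Heyting algebra. -/
theorem parallelizable_continuous_weihrauch_heyting (P Q : MV)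
    (h : ¬ CWle P Q) (hQ : CWle (fpar Q) Q) :
    ∃ M : MV, CWle (fpar M) M ∧ CWle (oplus P M) Q ∧
      ∀ R : MV, CWle (fpar R) R → CWle (oplus P R) Q → CWle R M := by
  exact ⟨HA.Impl P Q, HA.fpar_Impl_le P Q h hQ, HA.oplus_Impl_le P Q,
    fun R _ hPR => HA.le_Impl P Q R h hPR⟩
end

section
/- For every 𝒜 ⊆ ℕ^ℕ and all partial multivalued functions P, Q on Baire space: if c_𝒜 ≤ᶜ_W P ∐ Q, then c_𝒜 ≤ᶜ_W P or c_𝒜 ≤ᶜ_W Q. (That is, c_𝒜 is join-irreducible in the continuous Weihrauch lattice.) -/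
open Weihrauch

lemma right_pair (p q : Baire) : right (pair p q) = q := by
  funext n
  have h1 : (2 * n + 1) % 2 = 1 := by omega
  have h2 : (2 * n + 1) / 2 = n := by omega
  simp [right, pair, h1, h2]

lemma continuous_right : Continuous right := by
  apply continuous_pi
  intro n
  exact continuous_apply (2 * n + 1)

lemma continuous_cons (k : ℕ) : Continuous (cons k) := by
  apply continuous_pi
  intro n
  cases n with
  | zero => simpa [cons] using continuous_const
  | succ m => simpa [cons] using continuous_apply m

lemma continuous_pair_left (p : Baire) : Continuous (fun q => pair p q) := by
  apply continuous_pi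
  intro n
  by_cases h : n % 2 = 0
  · simpa [pair, h] using continuous_const
  · simpa [pair, h] using continuous_apply (n / 2)

lemma mem_dom_cA (A : Set Baire) (hA : A.Nonempty) : zero ∈ dom (cA A) := by
  obtain ⟨a, ha⟩ := hA
  exact ⟨a, rfl, ha⟩

lemma eq_zero_of_mem_dom_cA {A : Set Baire} {x : Baire} (hx : x ∈ dom (cA A)) :
    x = zero := by
  obtain ⟨r, hx0, _⟩ := hx
  exact hx0

/-- Key construction: if we can embed values of `R` at `tail (K zero)` into
values of `C` at `K zero` via `cons b`, then the reduction to `C` induces one to `R`. -/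
lemma key (A : Set Baire) (hA : A.Nonempty) (C R : MV) (H K : Baire → Baire) (b : ℕ)
    (hRdom : (R (tail (K zero))).Nonempty)
    (hmem : ∀ y ∈ R (tail (K zero)), cons b y ∈ C (K zero))
    (hHc : ContinuousOn H {z | ∃ x ∈ dom (cA A), ∃ y ∈ C (K x), z = pair x y})
    (hH : ∀ x ∈ dom (cA A), ∀ y ∈ C (K x), H (pair x y) ∈ cA A x) :
    CWle (cA A) R := by
  refine ⟨fun z => H (pair zero (cons b (right z))), fun _ => tail (K zero), ?_, ?_, ?_, ?_⟩
  · exact continuous_const.continuousOn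
  · intro x _
    exact hRdom
  · have hg : Continuous (fun z => pair zero (cons b (right z))) :=
      (continuous_pair_left zero).comp ((continuous_cons b).comp continuous_right)
    refine ContinuousOn.comp hHc hg.continuousOn ?_
    rintro z ⟨x, hx, y, hy, rfl⟩
    have hx0 : x = zero := eq_zero_of_mem_dom_cA hx
    subst hx0
    refine ⟨zero, mem_dom_cA A hA, cons b y, hmem y hy, ?_⟩
    show pair zero (cons b (right (pair zero y))) = pair zero (cons b y)
    rw [right_pair]
  · intro x hx y hy
    have hx0 : x = zero := eq_zero_of_mem_dom_cA hx
    subst hx0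
    have := hH zero (mem_dom_cA A hA) (cons b y) (hmem y hy)
    simpa [right_pair] using this

/-- c_𝒜 is join-irreducible in the continuous Weihrauch lattice. -/
theorem cA_join_irreducible (A : Set Baire) (P Q : MV)
    (h : CWle (cA A) (coprod P Q)) :
    CWle (cA A) P ∨ CWle (cA A) Q := by
  rcases A.eq_empty_or_nonempty with hA | hA
  · -- A empty: dom (cA A) is empty, so the reduction is trivial.
    have hdom : dom (cA A) = ∅ := by
      ext x
      simp only [dom, cA, Set.mem_setOf_eq, Set.mem_empty_iff_false, iff_false]
      rintro ⟨r, _, hr⟩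
      simp [hA] at hr
    left
    refine ⟨id, id, ?_, ?_, ?_, ?_⟩
    · rw [hdom]; exact continuousOn_empty _
    · intro x hx; rw [hdom] at hx; exact absurd hx (Set.notMem_empty x)
    · have : {z | ∃ x ∈ dom (cA A), ∃ y ∈ P (id x), z = pair x y} = ∅ := by
        ext z
        simp [hdom]
      rw [this]; exact continuousOn_empty _
    · intro x hx; rw [hdom] at hx; exact absurd hx (Set.notMem_empty x)
  · obtain ⟨H, K, hKc, hKdom, hHc, hH⟩ := h
    have hz : zero ∈ dom (cA A) := mem_dom_cA A hA
    obtain ⟨r, hr⟩ := hKdom zero hz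
    rcases hr with ⟨hK0, s, hs, _⟩ | ⟨hK0, s, hs, _⟩
    · left
      refine key A hA (coprod P Q) P H K 0 ⟨s, hs⟩ ?_ hHc hH
      intro y hy
      exact Or.inl ⟨hK0, y, hy, rfl⟩
    · right
      refine key A hA (coprod P Q) Q H K 1 ⟨s, hs⟩ ?_ hHc hH
      intro y hy
      exact Or.inr ⟨hK0, y, hy, rfl⟩
end

section
/- For all partial multivalued functions P, Q on Baire space, (P ⊕ Q)* ≡ᶜ_W P* ⊕ Q* (the finite parallelization commutes with the infimum operation, up to continuous Weihrauch equivalence). -/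
namespace Weihrauch

lemma tail_cons (n : ℕ) (p : Baire) : tail (cons n p) = p := rfl
lemma left_pair (p q : Baire) : left (pair p q) = p := by
  funext n; simp [left, pair, Nat.mul_div_cancel_left _ (by norm_num : (0:ℕ) < 2)]
lemma right_pair (p q : Baire) : right (pair p q) = q := by
  funext n; simp [right, pair, Nat.mul_add_mod, Nat.mul_add_div (by norm_num : (0:ℕ) < 2)]
lemma pair_zero (p q : Baire) : pair p q 0 = p 0 := rfl
lemma pair_one (p q : Baire) : pair p q 1 = q 0 := rfl
lemma pair_two (p q : Baire) : pair p q 2 = p 1 := rfl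
lemma cell_mod {i n : ℕ} (j : ℕ) (h : i < n) : (j * n + i) % n = i := by
  rw [Nat.add_comm, Nat.add_mul_mod_self_right, Nat.mod_eq_of_lt h]

lemma cell_div {i n : ℕ} (j : ℕ) (h : i < n) : (j * n + i) / n = j := by
  have hn : 0 < n := Nat.lt_of_le_of_lt (Nat.zero_le _) h
  rw [Nat.add_comm, Nat.add_mul_div_right _ _ hn, Nat.div_eq_of_lt h, Nat.zero_add]

lemma fproj_ftup {n i : ℕ} (h : i < n) (f : ℕ → Baire) : fproj n i (ftup n f) = f i := by
  funext j
  simp only [fproj, ftup, cell_mod j h, cell_div j h]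

/-- Agreement on an initial segment. -/
def Agree (N : ℕ) (y z : Baire) : Prop := ∀ i, i < N → y i = z i

lemma Agree.mono {N M : ℕ} {y z : Baire} (h : Agree M y z) (hle : N ≤ M) : Agree N y z :=
  fun i hi => h i (lt_of_lt_of_le hi hle)

lemma Agree.apply {N : ℕ} {y z : Baire} (h : Agree N y z) {i : ℕ} (hi : i < N) : y i = z i :=
  h i hi

lemma Agree.tail {N M : ℕ} {y z : Baire} (h : Agree M y z) (hM : N + 1 ≤ M) :
    Agree N (tail y) (tail z) := fun i hi => h (i + 1) (by omega)

lemma Agree.left' {N M : ℕ} {y z : Baire} (h : Agree M y z) (hM : 2 * N ≤ M) :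
    Agree N (left y) (left z) := fun i hi => h (2 * i) (by omega)

lemma Agree.right' {N M : ℕ} {y z : Baire} (h : Agree M y z) (hM : 2 * N ≤ M) :
    Agree N (right y) (right z) := fun i hi => h (2 * i + 1) (by omega)

lemma Agree.pair' {N : ℕ} {p p' q q' : Baire} (h1 : Agree N p p') (h2 : Agree N q q') :
    Agree N (pair p q) (pair p' q') := by
  intro i hi
  show (if i % 2 = 0 then p (i / 2) else q (i / 2)) = (if i % 2 = 0 then p' (i / 2) else q' (i / 2))
  by_cases h : i % 2 = 0
  · simp only [if_pos h]; exact h1 (i / 2) (by omega)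
  · simp only [if_neg h]; exact h2 (i / 2) (by omega)

lemma Agree.cons' {N : ℕ} {p q : Baire} {a b : ℕ} (hab : a = b) (h : Agree N p q) :
    Agree N (cons a p) (cons b q) := by
  intro i hi
  cases i with
  | zero => exact hab
  | succ k => exact h k (by omega)

lemma Agree.fproj' {N M n i : ℕ} {y z : Baire} (h : Agree M y z) (hM : N * n + i + 1 ≤ M) :
    Agree N (fproj n i y) (fproj n i z) := by
  intro j hj
  refine h (j * n + i) ?_
  have : j * n ≤ N * n := Nat.mul_le_mul_right n (by omega)
  omega

lemma Agree.ftup {N n : ℕ} {f g : ℕ → Baire} (h : ∀ i, i < max n N → Agree N (f i) (g i)) :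
    Agree N (ftup n f) (ftup n g) := by
  intro k hk
  show f (k % n) (k / n) = g (k % n) (k / n)
  rcases Nat.eq_zero_or_pos n with hn | hn
  · subst hn
    rw [Nat.mod_zero, Nat.div_zero]
    exact h k (by omega) 0 (by omega)
  · exact h (k % n) (lt_of_lt_of_le (Nat.mod_lt _ hn) (le_max_left _ _))
      (k / n) (lt_of_le_of_lt (Nat.div_le_self _ _) hk)

lemma agree_mem_nhds (z : Baire) (N : ℕ) : {y | Agree N y z} ∈ nhds z := by
  have : {y : Baire | Agree N y z} = ⋂ i ∈ Finset.range N, (fun y : Baire => y i) ⁻¹' {z i} := by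
    ext y; simp [Agree]
  rw [this]
  refine (Filter.biInter_finset_mem _).mpr fun i _ => ?_
  exact IsOpen.mem_nhds ((isOpen_discrete _).preimage (continuous_apply i)) rfl

lemma continuous_of_agree {F : Baire → Baire}
    (h : ∀ z N, ∃ M, ∀ y, Agree M y z → Agree N (F y) (F z)) : Continuous F := by
  apply continuous_pi
  intro k
  rw [continuous_iff_continuousAt]
  intro z
  obtain ⟨M, hM⟩ := h z (k + 1)
  have hev : (fun y => F y k) =ᶠ[nhds z] (fun _ => F z k) :=
    Filter.eventually_of_mem (agree_mem_nhds z M) (fun y hy => hM y hy k (by omega))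
  exact ContinuousAt.congr continuousAt_const hev.symm

end Weihrauch

namespace Weihrauch

lemma Agree.rfl {N : ℕ} {x : Baire} : Agree N x x := fun _ _ => Eq.refl _

/-- Least j < n with f j = true (if any; junk otherwise). -/
def seek (f : ℕ → Bool) : ℕ → ℕ
  | 0 => 0
  | n+1 => if f n then n else seek f n

lemma seek_lt {f : ℕ → Bool} {n : ℕ} (hn : 0 < n) : seek f n < n := by
  induction n with
  | zero => omega
  | succ n ih =>
    show (if f n then n else seek f n) < n + 1
    by_cases h : f n
    · simp [h]
    · rcases Nat.eq_zero_or_pos n with h0 | h0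
      · subst h0; simp [h, seek]
      · simp only [if_neg h]; exact Nat.lt_succ_of_lt (ih h0)

lemma seek_spec {f : ℕ → Bool} {n : ℕ} (h : ∃ j, j < n ∧ f j = true) :
    f (seek f n) = true := by
  induction n with
  | zero => obtain ⟨j, hj, _⟩ := h; omega
  | succ n ih =>
    show f (if f n then n else seek f n) = true
    by_cases hf : f n
    · simp [hf]
    · simp only [if_neg hf]
      refine ih ?_
      obtain ⟨j, hj, hfj⟩ := h
      have : j ≠ n := fun e => hf (e ▸ hfj)
      exact ⟨j, by omega, hfj⟩

lemma seek_congr {f g : ℕ → Bool} {n : ℕ} (h : ∀ j, j < n → f j = g j) :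
    seek f n = seek g n := by
  induction n with
  | zero => rfl
  | succ n ih =>
    show (if f n then n else seek f n) = (if g n then n else seek g n)
    rw [h n (Nat.lt_succ_self n), ih (fun j hj => h j (Nat.lt_succ_of_lt hj))]

/-- Inner reduction for (P⊕Q)* ≤ P*⊕Q*. -/
def K1 (x : Baire) : Baire :=
  pair (cons (x 0) (ftup (x 0) (fun i => left (fproj (x 0) i (tail x)))))
       (cons (x 0) (ftup (x 0) (fun i => right (fproj (x 0) i (tail x)))))

/-- Outer reduction for (P⊕Q)* ≤ P*⊕Q*. -/
def H1 (w : Baire) : Baire :=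
  if w 0 = 0 then zero
  else cons (w 0) (ftup (w 0) (fun i => cons (w 1) (fproj (w 0) i (tail (tail (right w))))))

/-- Inner reduction for P*⊕Q* ≤ (P⊕Q)*. -/
def K2 (z : Baire) : Baire :=
  cons (z 0 * z 1) (ftup (z 0 * z 1) (fun c =>
    pair (fproj (z 0) (c % z 0) (tail (left z)))
         (fproj (z 1) (c / z 0) (tail (right z)))))

/-- The oracle answer components available to the outer reduction. -/
def rrr (w : Baire) (c : ℕ) : Baire := fproj (w 0 * w 2) c (tail (right w))

/-- Does row j consist entirely of P-answers? -/
def rowP (w : Baire) (j : ℕ) : Bool := decide (∀ i, i < w 0 → rrr w (j * w 0 + i) 0 = 0)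

/-- A column index with a Q-answer in row j. -/
def colI (w : Baire) (j : ℕ) : ℕ := seek (fun i => rrr w (j * w 0 + i) 0 != 0) (w 0)

/-- Outer reduction for P*⊕Q* ≤ (P⊕Q)*. -/
def H2 (w : Baire) : Baire :=
  if w 0 = 0 then cons 0 zero
  else if w 2 = 0 then cons 1 zero
  else if rowP w (seek (rowP w) (w 2)) then
    cons 0 (cons (w 0) (ftup (w 0) (fun i => tail (rrr w (seek (rowP w) (w 2) * w 0 + i)))))
  else
    cons 1 (cons (w 2) (ftup (w 2) (fun j => tail (rrr w (j * w 0 + colI w j)))))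

lemma rrr_eq (w : Baire) (c t : ℕ) : rrr w c t = w (2 * (t * (w 0 * w 2) + c + 1) + 1) := rfl

end Weihrauch

namespace Weihrauch

lemma K1_cont : Continuous K1 := by
  apply continuous_of_agree
  intro z N
  refine ⟨2*N*(z 0) + max (z 0) N + 2, fun y hy => ?_⟩
  have hy0 : y 0 = z 0 := hy.apply (by omega)
  simp only [K1, hy0]
  refine Agree.pair' (Agree.cons' rfl (Agree.ftup fun i hi => ?_))
    (Agree.cons' rfl (Agree.ftup fun i hi => ?_))
  · exact Agree.left' (Agree.fproj' (Agree.tail (hy.mono (by omega)) le_rfl) le_rfl) le_rfl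
  · exact Agree.right' (Agree.fproj' (Agree.tail (hy.mono (by omega)) le_rfl) le_rfl) le_rfl

lemma H1_cont : Continuous H1 := by
  apply continuous_of_agree
  intro z N
  by_cases hz0 : z 0 = 0
  · refine ⟨1, fun y hy => ?_⟩
    have hy0 : y 0 = z 0 := hy.apply (by omega)
    simp only [H1, hy0, if_pos hz0]
    exact Agree.rfl
  · refine ⟨2*(N*(z 0) + max (z 0) N + 3), fun y hy => ?_⟩
    have hy0 : y 0 = z 0 := hy.apply (by omega)
    have hy1 : y 1 = z 1 := hy.apply (by omega)
    simp only [H1, hy0, hy1, if_neg hz0]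
    refine Agree.cons' rfl (Agree.ftup fun i hi => Agree.cons' rfl ?_)
    exact Agree.fproj' (Agree.tail (Agree.tail (Agree.right' (hy.mono (by omega)) le_rfl)
      le_rfl) le_rfl) le_rfl

lemma K2_cont : Continuous K2 := by
  apply continuous_of_agree
  intro z N
  refine ⟨2*(N*(z 0)) + 2*(N*(z 1)) + 2*(max (z 0 * z 1) N) + 10, fun y hy => ?_⟩
  have hy0 : y 0 = z 0 := hy.apply (by omega)
  have hy1 : y 1 = z 1 := hy.apply (by omega)
  simp only [K2, hy0, hy1]
  refine Agree.cons' rfl (Agree.ftup fun c hc => Agree.pair' ?_ ?_)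
  · refine Agree.fproj' (Agree.tail (Agree.left' (hy.mono ?_) le_rfl) le_rfl) le_rfl
    have h1 : c % z 0 ≤ c := Nat.mod_le _ _
    omega
  · refine Agree.fproj' (Agree.tail (Agree.right' (hy.mono ?_) le_rfl) le_rfl) le_rfl
    have h1 : c / z 0 ≤ c := Nat.div_le_self _ _
    omega

end Weihrauch

namespace Weihrauch

lemma H2_cont : Continuous H2 := by
  apply continuous_of_agree
  intro z N
  by_cases hz0 : z 0 = 0
  · refine ⟨1, fun y hy => ?_⟩
    have hy0 : y 0 = z 0 := hy.apply (by omega)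
    simp only [H2, hy0, if_pos hz0]
    exact Agree.rfl
  by_cases hz2 : z 2 = 0
  · refine ⟨3, fun y hy => ?_⟩
    have hy0 : y 0 = z 0 := hy.apply (by omega)
    have hy2 : y 2 = z 2 := hy.apply (by omega)
    simp only [H2, hy0, hy2, if_neg hz0, if_pos hz2]
    exact Agree.rfl
  refine ⟨2*(N*(z 0 * z 2)) + 2*((max (z 2) N)*(z 0)) + 2*((z 2)*(z 0)) + 2*(max (z 0) N)
    + 2*(z 0) + 20, fun y hy => ?_⟩
  have hy0 : y 0 = z 0 := hy.apply (by omega)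
  have hy2 : y 2 = z 2 := hy.apply (by omega)
  have hrr : ∀ c t, c ≤ (max (z 2) N)*(z 0) + (z 2)*(z 0) + max (z 0) N + z 0 → t ≤ N →
      rrr y c t = rrr z c t := by
    intro c t hc ht
    rw [rrr_eq, rrr_eq, hy0, hy2]
    refine hy.apply ?_
    have h1 : t * (z 0 * z 2) ≤ N * (z 0 * z 2) := Nat.mul_le_mul_right _ ht
    omega
  have hrow : ∀ j, j ≤ max (z 2) N → rowP y j = rowP z j := by
    intro j hj
    simp only [rowP, hy0]
    refine decide_eq_decide.mpr (forall_congr' fun i => imp_congr_right fun hi => ?_)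
    rw [hrr (j * z 0 + i) 0 ?_ (Nat.zero_le N)]
    have h1 : j * z 0 ≤ (max (z 2) N) * z 0 := Nat.mul_le_mul_right _ hj
    omega
  have hcol : ∀ j, j ≤ max (z 2) N → colI y j = colI z j := by
    intro j hj
    simp only [colI, hy0]
    refine seek_congr fun i hi => ?_
    rw [hrr (j * z 0 + i) 0 ?_ (Nat.zero_le N)]
    have h1 : j * z 0 ≤ (max (z 2) N) * z 0 := Nat.mul_le_mul_right _ hj
    omega
  have hseek : seek (rowP y) (z 2) = seek (rowP z) (z 2) :=
    seek_congr fun j hj => hrow j (by omega)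
  have hj0 : seek (rowP z) (z 2) < z 2 := seek_lt (Nat.pos_of_ne_zero hz2)
  simp only [H2, hy0, hy2, if_neg hz0, if_neg hz2, hseek, hrow _ (by omega : seek (rowP z) (z 2) ≤ max (z 2) N)]
  by_cases hb : rowP z (seek (rowP z) (z 2)) = true
  · simp only [if_pos hb]
    refine Agree.cons' rfl (Agree.cons' rfl (Agree.ftup fun i hi => ?_))
    refine Agree.tail (M := N + 1) (fun t ht => hrr _ t ?_ (by omega)) le_rfl
    have h1 : seek (rowP z) (z 2) * z 0 ≤ (z 2) * (z 0) :=
      Nat.mul_le_mul_right _ (le_of_lt hj0)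
    omega
  · simp only [if_neg hb]
    refine Agree.cons' rfl (Agree.cons' rfl (Agree.ftup fun j hj => ?_))
    rw [hcol j (by omega)]
    refine Agree.tail (M := N + 1) (fun t ht => hrr _ t ?_ (by omega)) le_rfl
    have h1 : j * z 0 ≤ (max (z 2) N) * z 0 := Nat.mul_le_mul_right _ (le_of_lt hj)
    have h2 : colI z j < z 0 := seek_lt (Nat.pos_of_ne_zero hz0)
    omega

end Weihrauch

namespace Weihrauch

lemma cons_zero (a : ℕ) (p : Baire) : cons a p 0 = a := rfl
lemma cons_succ (a : ℕ) (p : Baire) (k : ℕ) : cons a p (k+1) = p k := rfl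

lemma dom_fpar_of {R : MV} {x : Baire} {n : ℕ} (hn : x 0 = n)
    (h : ∀ i, i < n → fproj n i (tail x) ∈ dom R) : x ∈ dom (fpar R) := by
  rcases Nat.eq_zero_or_pos n with h0 | h0
  · exact ⟨zero, Or.inl ⟨by omega, rfl⟩⟩
  · choose s hs using h
    refine ⟨cons n (ftup n (fun i => if hi : i < n then s i hi else zero)),
      Or.inr ⟨by omega, by rw [cons_zero, hn], fun i hi => ?_⟩⟩
    rw [hn] at hi ⊢
    rw [tail_cons, fproj_ftup hi]
    show (if h' : i < n then s i h' else zero) ∈ _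
    rw [dif_pos hi]
    exact hs i hi

lemma dom_fpar_elim {R : MV} {x : Baire} {n : ℕ} (h : x ∈ dom (fpar R)) (hn : x 0 = n)
    (h0 : n ≠ 0) : ∀ i, i < n → fproj n i (tail x) ∈ dom R := by
  obtain ⟨r, hr⟩ := h
  rcases hr with ⟨e, _⟩ | ⟨_, _, hc⟩
  · omega
  · intro i hi
    rw [← hn] at hi
    rw [← hn]
    exact ⟨_, hc i hi⟩

lemma dom1 {P Q : MV} {x : Baire} (hx : x ∈ dom (fpar (oplus P Q))) :
    ∀ i, i < x 0 → left (fproj (x 0) i (tail x)) ∈ dom P ∧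
      right (fproj (x 0) i (tail x)) ∈ dom Q := by
  intro i hi
  have h0 : x 0 ≠ 0 := by omega
  obtain ⟨r, hr1, hr2, _⟩ := dom_fpar_elim hx rfl h0 i hi
  exact ⟨hr1, hr2⟩

lemma dom2 {R S : MV} {z : Baire} (hz : z ∈ dom (oplus R S)) :
    left z ∈ dom R ∧ right z ∈ dom S := by
  obtain ⟨r, hr⟩ := hz
  exact ⟨hr.1, hr.2.1⟩

theorem red1 (P Q : MV) : CWle (fpar (oplus P Q)) (oplus (fpar P) (fpar Q)) := by
  refine ⟨H1, K1, K1_cont.continuousOn, ?_, H1_cont.continuousOn, ?_⟩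
  · -- K1 maps domains
    intro x hx
    have hA : left (K1 x) ∈ dom (fpar P) := by
      have e : left (K1 x) = cons (x 0) (ftup (x 0) (fun i => left (fproj (x 0) i (tail x)))) :=
        left_pair _ _
      rw [e]
      refine dom_fpar_of (cons_zero _ _) fun i hi => ?_
      rw [tail_cons, fproj_ftup hi]
      exact (dom1 hx i hi).1
    have hB : right (K1 x) ∈ dom (fpar Q) := by
      have e : right (K1 x) = cons (x 0) (ftup (x 0) (fun i => right (fproj (x 0) i (tail x)))) :=
        right_pair _ _
      rw [e]
      refine dom_fpar_of (cons_zero _ _) fun i hi => ?_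
      rw [tail_cons, fproj_ftup hi]
      exact (dom1 hx i hi).2
    obtain ⟨s, hs⟩ := id hA
    refine ⟨cons 0 s, ?_⟩
    simp only [oplus, Set.mem_setOf_eq]
    exact ⟨hA, hB, Or.inl ⟨s, hs, rfl⟩⟩
  · -- H1 correctness
    intro x hx y hy
    simp only [oplus, Set.mem_setOf_eq] at hy
    obtain ⟨hyl, hyr, hcase⟩ := hy
    simp only [H1, pair_zero, pair_one, right_pair]
    by_cases h0 : x 0 = 0
    · rw [if_pos h0]
      simp only [fpar, Set.mem_setOf_eq]
      exact Or.inl ⟨h0, by trivial⟩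
    · rw [if_neg h0]
      simp only [fpar, Set.mem_setOf_eq]
      rcases hcase with ⟨s, hs, rfl⟩ | ⟨s, hs, rfl⟩
      · -- P-answer
        have e : left (K1 x) = cons (x 0) (ftup (x 0) (fun i => left (fproj (x 0) i (tail x)))) :=
          left_pair _ _
        rw [e] at hs
        simp only [fpar, Set.mem_setOf_eq, cons_zero, tail_cons] at hs
        rcases hs with ⟨e0, _⟩ | ⟨_, hs0, hsi⟩
        · omega
        · refine Or.inr ⟨by omega, cons_zero _ _, fun i hi => ?_⟩
          rw [tail_cons, fproj_ftup hi]
          have hP := hsi i hi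
          rw [fproj_ftup hi] at hP
          simp only [cons_zero, tail_cons]
          exact ⟨(dom1 hx i hi).1, (dom1 hx i hi).2, Or.inl ⟨_, hP, rfl⟩⟩
      · -- Q-answer
        have e : right (K1 x) = cons (x 0) (ftup (x 0) (fun i => right (fproj (x 0) i (tail x)))) :=
          right_pair _ _
        rw [e] at hs
        simp only [fpar, Set.mem_setOf_eq, cons_zero, tail_cons] at hs
        rcases hs with ⟨e0, _⟩ | ⟨_, hs0, hsi⟩
        · omega
        · refine Or.inr ⟨by omega, cons_zero _ _, fun i hi => ?_⟩
          rw [tail_cons, fproj_ftup hi]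
          have hQ := hsi i hi
          rw [fproj_ftup hi] at hQ
          simp only [cons_zero, tail_cons]
          exact ⟨(dom1 hx i hi).1, (dom1 hx i hi).2, Or.inr ⟨_, hQ, rfl⟩⟩

end Weihrauch

namespace Weihrauch

lemma left_zero (z : Baire) : left z 0 = z 0 := rfl
lemma right_zero (z : Baire) : right z 0 = z 1 := rfl

theorem red2 (P Q : MV) : CWle (oplus (fpar P) (fpar Q)) (fpar (oplus P Q)) := by
  refine ⟨H2, K2, K2_cont.continuousOn, ?_, H2_cont.continuousOn, ?_⟩
  · -- K2 maps domains
    intro z hz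
    obtain ⟨hu, hv⟩ := dom2 hz
    refine dom_fpar_of (R := oplus P Q) (x := K2 z) (n := z 0 * z 1) (cons_zero _ _)
      fun c hc => ?_
    have h0 : 0 < z 0 := by
      rcases Nat.eq_zero_or_pos (z 0) with h | h
      · rw [h, Nat.zero_mul] at hc; omega
      · exact h
    have h1 : 0 < z 1 := by
      rcases Nat.eq_zero_or_pos (z 1) with h | h
      · rw [h, Nat.mul_zero] at hc; omega
      · exact h
    have e : tail (K2 z) = ftup (z 0 * z 1) (fun c =>
        pair (fproj (z 0) (c % z 0) (tail (left z)))
             (fproj (z 1) (c / z 0) (tail (right z)))) := tail_cons _ _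
    rw [e, fproj_ftup hc]
    have hP : fproj (z 0) (c % z 0) (tail (left z)) ∈ dom P :=
      dom_fpar_elim (n := z 0) hu rfl (by omega) _ (Nat.mod_lt _ h0)
    have hQ : fproj (z 1) (c / z 0) (tail (right z)) ∈ dom Q := by
      refine dom_fpar_elim (n := z 1) hv rfl (by omega) _ ?_
      rw [Nat.div_lt_iff_lt_mul h0]
      rw [Nat.mul_comm] at hc
      exact hc
    obtain ⟨s, hs⟩ := id hP
    refine ⟨cons 0 s, ?_⟩
    simp only [oplus, Set.mem_setOf_eq, left_pair, right_pair]
    exact ⟨hP, hQ, Or.inl ⟨s, hs, rfl⟩⟩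
  · -- H2 correctness
    intro z hz y hy
    obtain ⟨hu, hv⟩ := dom2 hz
    simp only [H2]; rw [pair_zero, pair_two]
    by_cases h0 : z 0 = 0
    · rw [if_pos h0]
      simp only [oplus, Set.mem_setOf_eq]
      refine ⟨hu, hv, Or.inl ⟨zero, ?_, rfl⟩⟩
      simp only [fpar, Set.mem_setOf_eq]
      exact Or.inl ⟨h0, by trivial⟩
    rw [if_neg h0]
    by_cases h2 : z 1 = 0
    · rw [if_pos h2]
      simp only [oplus, Set.mem_setOf_eq]
      refine ⟨hu, hv, Or.inr ⟨zero, ?_, rfl⟩⟩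
      simp only [fpar, Set.mem_setOf_eq]
      exact Or.inl ⟨h2, by trivial⟩
    rw [if_neg h2]
    -- unpack the oracle answer
    simp only [fpar, Set.mem_setOf_eq, K2, cons_zero, tail_cons] at hy
    rcases hy with ⟨e0, _⟩ | ⟨hpos, hy0, hyc⟩
    · exact absurd e0 (Nat.mul_ne_zero h0 h2)
    have hcell : ∀ c, c < z 0 * z 1 → fproj (z 0 * z 1) c (tail y) ∈ oplus P Q
        (pair (fproj (z 0) (c % z 0) (tail (left z)))
              (fproj (z 1) (c / z 0) (tail (right z)))) := by
      intro c hc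
      have := hyc c hc
      rwa [fproj_ftup hc] at this
    have hrrr : ∀ c, rrr (pair z y) c = fproj (z 0 * z 1) c (tail y) := by
      intro c
      simp only [rrr, pair_zero, pair_two, right_pair]
    have hrowP : ∀ j, rowP (pair z y) j = true ↔
        ∀ i, i < z 0 → fproj (z 0 * z 1) (j * z 0 + i) (tail y) 0 = 0 := by
      intro j
      simp only [rowP, pair_zero, hrrr, decide_eq_true_eq]
    have hj0 : seek (rowP (pair z y)) (z 1) < z 1 := seek_lt (Nat.pos_of_ne_zero h2)
    by_cases hb : rowP (pair z y) (seek (rowP (pair z y)) (z 1)) = true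
    · rw [if_pos hb]
      set j0 := seek (rowP (pair z y)) (z 1) with hj0def
      simp only [oplus, Set.mem_setOf_eq]
      refine ⟨hu, hv, Or.inl ⟨_, ?_, rfl⟩⟩
      simp only [fpar, Set.mem_setOf_eq, left_zero]
      refine Or.inr ⟨Nat.pos_of_ne_zero h0, cons_zero _ _, fun i hi => ?_⟩
      have hi' : i < z 0 := hi
      rw [tail_cons, fproj_ftup hi']
      have hc : j0 * z 0 + i < z 0 * z 1 := by
        have ha : (j0 + 1) * z 0 = j0 * z 0 + z 0 := Nat.succ_mul _ _
        have hb' : (j0 + 1) * z 0 ≤ z 1 * z 0 := Nat.mul_le_mul_right _ (by omega)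
        have hcm : z 1 * z 0 = z 0 * z 1 := Nat.mul_comm _ _
        omega
      have hm := hcell (j0 * z 0 + i) hc
      rw [cell_mod j0 hi'] at hm
      simp only [oplus, Set.mem_setOf_eq, left_pair, right_pair] at hm
      obtain ⟨_, _, hm3⟩ := hm
      rcases hm3 with ⟨s, hsP, hes⟩ | ⟨s, hsQ, hes⟩
      · rw [hrrr, hes, tail_cons]
        exact hsP
      · exfalso
        have h00 := (hrowP j0).mp hb i hi'
        rw [hes] at h00
        simp [cons_zero] at h00
    · rw [if_neg hb]
      have hall : ∀ j, j < z 1 → ∃ i, i < z 0 ∧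
          rrr (pair z y) (j * z 0 + i) 0 ≠ 0 := by
        intro j hj
        by_contra hne
        push_neg at hne
        refine hb (seek_spec ⟨j, hj, ?_⟩)
        refine (hrowP j).mpr fun i hi => ?_
        have := hne i hi
        rw [hrrr] at this
        omega
      simp only [oplus, Set.mem_setOf_eq]
      refine ⟨hu, hv, Or.inr ⟨_, ?_, rfl⟩⟩
      simp only [fpar, Set.mem_setOf_eq, right_zero]
      refine Or.inr ⟨Nat.pos_of_ne_zero h2, cons_zero _ _, fun j hj => ?_⟩
      have hj' : j < z 1 := hj
      rw [tail_cons, fproj_ftup hj']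
      -- the chosen column in row j
      have hcolspec : colI (pair z y) j < z 0 ∧
          rrr (pair z y) (j * z 0 + colI (pair z y) j) 0 ≠ 0 := by
        obtain ⟨i, hi, hne⟩ := hall j hj'
        have hlt : colI (pair z y) j < z 0 := by
          have : colI (pair z y) j < (pair z y) 0 := seek_lt (Nat.pos_of_ne_zero h0)
          exact this
        refine ⟨hlt, ?_⟩
        have hsp := seek_spec (f := fun i => rrr (pair z y) (j * (pair z y) 0 + i) 0 != 0)
          (n := (pair z y) 0) ⟨i, hi, by simp only [bne_iff_ne, ne_eq, decide_eq_true_eq]; exact hne⟩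
        simp only [bne_iff_ne, ne_eq] at hsp
        exact hsp
      obtain ⟨hclt, hcne⟩ := hcolspec
      have hc : j * z 0 + colI (pair z y) j < z 0 * z 1 := by
        have ha : (j + 1) * z 0 = j * z 0 + z 0 := Nat.succ_mul _ _
        have hb' : (j + 1) * z 0 ≤ z 1 * z 0 := Nat.mul_le_mul_right _ (by omega)
        have hcm : z 1 * z 0 = z 0 * z 1 := Nat.mul_comm _ _
        omega
      have hm := hcell _ hc
      rw [cell_div j hclt] at hm
      simp only [oplus, Set.mem_setOf_eq, left_pair, right_pair] at hm
      obtain ⟨_, _, hm3⟩ := hm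
      rcases hm3 with ⟨s, hsP, hes⟩ | ⟨s, hsQ, hes⟩
      · exfalso
        rw [hrrr, hes] at hcne
        exact hcne rfl
      · rw [hrrr, hes, tail_cons]
        exact hsQ

end Weihrauch

open Weihrauch

/-- (P ⊕ Q)* ≡ᶜ_W P* ⊕ Q*: finite parallelization commutes with the infimum
operation, up to continuous Weihrauch equivalence. -/
theorem star_oplus (P Q : MV) :
    CWequiv (fpar (oplus P Q)) (oplus (fpar P) (fpar Q)) := ⟨red1 P Q, red2 P Q⟩
end
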